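/- arXiv:2306.08172 — 7 statements merged into one kernel-verified Lean document; each statement's English description precedes it below -/
import Mathlib

section
/- Let $b>1$ and let $\alpha$ be the unique solution of $\tan(\alpha\ln b)+2\alpha=0$ in the interval $(\pi/(2\ln b),\,\pi/\ln b)$. For the function $f(x)=x^{-1/2}\big(2\alpha\cos(\alpha\ln x)+\sin(\alpha\ln x)\big)$ on $[1,b]$, equality holds in Hardy's inequality: $\int_1^b\Big(\frac{1}{x}\int_1^x f(t)\,dt\Big)^2 dx = \frac{4}{1+4\alpha^2}\int_1^b f^2(x)\,dx$. -/
open Real MeasureTheory Set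

/-!
`F(x) = 2 √x sin (α log x)` is a primitive of the extremal `f`, and it solves the Euler equation
`x² F'' + (1/4 + α²) F = 0`. Hence `(F F')' = F'² - (1/4 + α²) (F / x)²`, so the defect
`∫ f² - (1/4 + α²) ∫ (F / x)²` is the boundary term `F(b) f(b) - F(1) f(1)`. It vanishes because
`F(1) = 0`, while the root condition `tan (α log b) = -2α` says exactly that `f(b) = 0`.
-/

theorem integral_sq_sub_mul_integral_div_sq_eq {F f : ℝ → ℝ} {a b c : ℝ} (ha : 0 < a)
    (hab : a ≤ b) (hF : ∀ x ∈ Icc a b, HasDerivAt F (f x) x)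
    (hf : ∀ x ∈ Icc a b, HasDerivAt f (-c * F x / x ^ 2) x) :
    (∫ x in a..b, f x ^ 2) - c * ∫ x in a..b, (F x / x) ^ 2 = F b * f b - F a * f a := by
  have hx₀ : ∀ x ∈ Icc a b, x ≠ 0 := fun x hx => (ha.trans_le hx.1).ne'
  have hFc : ContinuousOn F (Icc a b) := fun x hx => (hF x hx).continuousAt.continuousWithinAt
  have hfc : ContinuousOn f (Icc a b) := fun x hx => (hf x hx).continuousAt.continuousWithinAt
  have hf_sq : IntervalIntegrable (fun x => f x ^ 2) volume a b :=
    ((hfc.pow 2).mono (uIcc_of_le hab).subset).intervalIntegrable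
  have hF_div_sq : IntervalIntegrable (fun x => (F x / x) ^ 2) volume a b :=
    (((hFc.div continuousOn_id hx₀).pow 2).mono (uIcc_of_le hab).subset).intervalIntegrable
  rw [← intervalIntegral.integral_const_mul,
    ← intervalIntegral.integral_sub hf_sq (hF_div_sq.const_mul c)]
  refine intervalIntegral.integral_eq_sub_of_hasDerivAt (f := fun x => F x * f x)
    (fun x hx => ?_) (hf_sq.sub (hF_div_sq.const_mul c))
  rw [uIcc_of_le hab] at hx
  refine ((hF x hx).mul (hf x hx)).congr_deriv ?_
  field_simp [hx₀ x hx]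
  ring

lemma rpow_neg_one_half_eq_inv_sqrt {x : ℝ} (hx : 0 ≤ x) : x ^ (-(1 : ℝ) / 2) = (√x)⁻¹ := by
  rw [sqrt_eq_rpow, ← rpow_neg hx, neg_div]

lemma two_mul_mul_cos_add_sin_eq_zero_of_tan {α t : ℝ} (h : tan (α * t) + 2 * α = 0) :
    2 * α * cos (α * t) + sin (α * t) = 0 := by
  rw [tan_eq_sin_div_cos] at h
  -- where `cos` vanishes, `sin / cos = 0` and `h` forces `α = 0`
  by_cases hc : cos (α * t) = 0
  · obtain rfl : α = 0 := by simpa [hc] using h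
    simp
  · field_simp at h
    linarith

noncomputable def hardyExtremal (α x : ℝ) : ℝ :=
  x ^ (-(1 : ℝ) / 2) * (2 * α * cos (α * log x) + sin (α * log x))

noncomputable def hardyExtremalPrimitive (α x : ℝ) : ℝ :=
  2 * √x * sin (α * log x)

lemma hardyExtremalPrimitive_one (α : ℝ) : hardyExtremalPrimitive α 1 = 0 := by
  simp [hardyExtremalPrimitive]

lemma hasDerivAt_hardyExtremalPrimitive (α : ℝ) {x : ℝ} (hx : 0 < x) :
    HasDerivAt (hardyExtremalPrimitive α) (hardyExtremal α x) x := by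
  have hθ := (hasDerivAt_log hx.ne').const_mul α
  refine (((hasDerivAt_sqrt hx.ne').const_mul 2).mul hθ.sin).congr_deriv ?_
  have hs : √x ^ 2 = x := sq_sqrt hx.le
  have hs₀ : 0 < √x := sqrt_pos.mpr hx
  rw [hardyExtremal, rpow_neg_one_half_eq_inv_sqrt hx.le]
  field_simp
  linear_combination 2 * α * cos (α * log x) * hs

lemma hasDerivAt_hardyExtremal (α : ℝ) {x : ℝ} (hx : 0 < x) :
    HasDerivAt (hardyExtremal α)
      (-((1 + 4 * α ^ 2) / 4) * hardyExtremalPrimitive α x / x ^ 2) x := by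
  have hθ := (hasDerivAt_log hx.ne').const_mul α
  refine ((hasDerivAt_rpow_const (p := -(1 : ℝ) / 2) (Or.inl hx.ne')).mul
    ((hθ.cos.const_mul (2 * α)).add hθ.sin)).congr_deriv ?_
  have hs : √x ^ 2 = x := sq_sqrt hx.le
  have hs₀ : 0 < √x := sqrt_pos.mpr hx
  rw [Pi.add_apply, hardyExtremalPrimitive, rpow_sub_one hx.ne',
    rpow_neg_one_half_eq_inv_sqrt hx.le]
  field_simp
  linear_combination 4 * (1 + 4 * α ^ 2) * sin (α * log x) * hs

lemma integral_hardyExtremal (α : ℝ) {a b : ℝ} (ha : 0 < a) (hab : a ≤ b) :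
    ∫ x in a..b, hardyExtremal α x = hardyExtremalPrimitive α b - hardyExtremalPrimitive α a := by
  have hpos : ∀ x ∈ uIcc a b, 0 < x := fun x hx => ha.trans_le (uIcc_of_le hab ▸ hx).1
  refine intervalIntegral.integral_eq_sub_of_hasDerivAt
    (fun x hx => hasDerivAt_hardyExtremalPrimitive α (hpos x hx)) ?_
  exact ContinuousOn.intervalIntegrable fun x hx =>
    (hasDerivAt_hardyExtremal α (hpos x hx)).continuousAt.continuousWithinAt

theorem hardy_equality_extremal_function_general (b : ℝ) (hb : 1 < b) (α : ℝ)
    (hroot : Real.tan (α * Real.log b) + 2 * α = 0)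
    (f : ℝ → ℝ)
    (hf : ∀ x ∈ Set.Icc 1 b,
      f x = x ^ (-(1 : ℝ) / 2) *
        (2 * α * Real.cos (α * Real.log x) + Real.sin (α * Real.log x))) :
    ∫ x in (1 : ℝ)..b, ((1 / x) * ∫ t in (1 : ℝ)..x, f t) ^ 2
      = (4 / (1 + 4 * α ^ 2)) * ∫ x in (1 : ℝ)..b, f x ^ 2 := by
  have hf_eq : EqOn f (hardyExtremal α) (Icc 1 b) := hf
  have hF : ∀ x ∈ Icc 1 b, ∫ t in (1 : ℝ)..x, f t = hardyExtremalPrimitive α x := fun x hx => by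
    rw [intervalIntegral.integral_congr (hf_eq.mono (uIcc_of_le hx.1 ▸ Icc_subset_Icc_right hx.2)),
      integral_hardyExtremal α one_pos hx.1, hardyExtremalPrimitive_one, sub_zero]
  have hlhs : ∫ x in (1 : ℝ)..b, ((1 / x) * ∫ t in (1 : ℝ)..x, f t) ^ 2
      = ∫ x in (1 : ℝ)..b, (hardyExtremalPrimitive α x / x) ^ 2 :=
    intervalIntegral.integral_congr fun x hx => by
      rw [hF x (uIcc_of_le hb.le ▸ hx), one_div_mul_eq_div]
  have hrhs : ∫ x in (1 : ℝ)..b, f x ^ 2 = ∫ x in (1 : ℝ)..b, hardyExtremal α x ^ 2 :=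
    intervalIntegral.integral_congr fun x hx => by rw [hf_eq (uIcc_of_le hb.le ▸ hx)]
  have hb_zero : hardyExtremal α b = 0 :=
    mul_eq_zero_of_right _ (two_mul_mul_cos_add_sin_eq_zero_of_tan hroot)
  have key := integral_sq_sub_mul_integral_div_sq_eq one_pos hb.le
    (fun x hx => hasDerivAt_hardyExtremalPrimitive α (one_pos.trans_le hx.1))
    (fun x hx => hasDerivAt_hardyExtremal α (one_pos.trans_le hx.1))
  rw [hb_zero, hardyExtremalPrimitive_one, mul_zero, zero_mul, sub_zero, sub_eq_zero] at key
  rw [hlhs, hrhs, key]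
  field_simp

theorem hardy_equality_extremal_function (b : ℝ) (hb : 1 < b) (α : ℝ)
    (hα : α ∈ Set.Ioo (π / (2 * Real.log b)) (π / Real.log b))
    (hroot : Real.tan (α * Real.log b) + 2 * α = 0)
    (f : ℝ → ℝ)
    (hf : ∀ x ∈ Set.Icc 1 b,
      f x = x ^ (-(1 : ℝ) / 2) *
        (2 * α * Real.cos (α * Real.log x) + Real.sin (α * Real.log x))) :
    ∫ x in (1 : ℝ)..b, ((1 / x) * ∫ t in (1 : ℝ)..x, f t) ^ 2
      = (4 / (1 + 4 * α ^ 2)) * ∫ x in (1 : ℝ)..b, f x ^ 2 :=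
  hardy_equality_extremal_function_general b hb α hroot f hf
end

section
/- Let $d(a,b)$ denote the smallest constant such that $\int_a^b\big(\frac{1}{x}\int_a^x f(t)\,dt\big)^2 dx \le d(a,b)\int_a^b f^2(x)\,dx$ holds for every $f\in L^2[a,b]$. Then there exist absolute constants $c_1>0$ and $c_2>0$ such that for all $0<a<b$ with $\ln(b/a)\ge 1$, one has $4-\frac{c_1}{\ln^2(b/a)} \le d(a,b) \le 4-\frac{c_2}{\ln^2(b/a)}$. -/
/-!
Write `L = log (b / a)`.

Lower bound: `F x = √x sin (π log (x / a) / L)` vanishes at `a`, and its derivative `f` has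
`∫ (F x / x)² = L / 2` and `∫ f² = π² / (2L) + L / 8`, so `d(a, b) ≥ 4L² / (L² + 4π²)`.

Upper bound (Schur test): for a positive weight `g` with primitive `G`, Cauchy–Schwarz gives
`(∫_a^x f)² ≤ G x ∫_a^x f² / g`, and Fubini turns `∫_a^b x⁻² G x ∫_a^x f² / g` into
`∫_a^b (f² / g) ∫_t^b x⁻² G`. So a constant `C` works as soon as `∫_t^b x⁻² G ≤ C g t` on `[a, b]`.
For `g x = x^(-1/2) cos (log (x / a) / L)`, both `G` and `∫ x⁻² G` have closed forms, and this
holds with `C = 4L² / (L² + 4)`.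
-/

open Real MeasureTheory Set

/-- The best constant in Hardy's integral inequality on `[a, b]`:
the infimum of all constants `d` such that the inequality holds for every `f`
with `f ^ 2` integrable on `[a, b]`. -/
noncomputable def hardyConst (a b : ℝ) : ℝ :=
  sInf {d : ℝ | ∀ f : ℝ → ℝ, IntegrableOn (fun x => f x ^ 2) (Set.Icc a b) →
    ∫ x in a..b, ((1 / x) * ∫ t in a..x, f t) ^ 2 ≤ d * ∫ x in a..b, f x ^ 2}

theorem sq_integral_le_integral_mul_integral_sq_div {α : Type*} [MeasurableSpace α]
    {μ : Measure α} {f g : α → ℝ} (hg_pos : ∀ᵐ x ∂μ, 0 < g x) (hg : Integrable g μ)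
    (hfg : Integrable (fun x => f x ^ 2 / g x) μ) :
    (∫ x, f x ∂μ) ^ 2 ≤ (∫ x, g x ∂μ) * ∫ x, f x ^ 2 / g x ∂μ := by
  have hG : 0 ≤ ∫ x, g x ∂μ := integral_nonneg_of_ae (hg_pos.mono fun x hx => hx.le)
  have hQ : 0 ≤ ∫ x, f x ^ 2 / g x ∂μ :=
    integral_nonneg_of_ae (hg_pos.mono fun x hx => div_nonneg (sq_nonneg _) hx.le)
  by_cases hf : Integrable f μ
  swap
  · rw [integral_undef hf]
    simpa using mul_nonneg hG hQ
  -- `∫ (f - s g)² / g ≥ 0` for every `s`: a quadratic in `s` with nonpositive discriminant.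
  have hquad : ∀ s : ℝ, 0 ≤ (∫ x, g x ∂μ) * (s * s) + (-2 * ∫ x, f x ∂μ) * s
      + ∫ x, f x ^ 2 / g x ∂μ := by
    intro s
    calc 0 ≤ ∫ x, (f x - s * g x) ^ 2 / g x ∂μ :=
          integral_nonneg_of_ae (hg_pos.mono fun x hx => div_nonneg (sq_nonneg _) hx.le)
      _ = ∫ x, (f x ^ 2 / g x - 2 * s * f x + s ^ 2 * g x) ∂μ := by
          refine integral_congr_ae (hg_pos.mono fun x hx => ?_)
          field_simp
          ring
      _ = _ := by
          have hfs : Integrable (fun x => 2 * s * f x) μ := hf.const_mul _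
          have hsub : Integrable (fun x => f x ^ 2 / g x - 2 * s * f x) μ := hfg.sub hfs
          rw [integral_add hsub (hg.const_mul _), integral_sub hfg hfs,
            integral_const_mul, integral_const_mul]
          ring
  have := discrim_le_zero hquad
  rw [discrim] at this
  nlinarith

theorem sq_intervalIntegral_le_mul {a b : ℝ} {f g : ℝ → ℝ} (hab : a ≤ b)
    (hg : ContinuousOn g (Icc a b)) (hg_pos : ∀ x ∈ Icc a b, 0 < g x)
    (hfg : IntegrableOn (fun x => f x ^ 2 / g x) (Icc a b)) :
    (∫ x in a..b, f x) ^ 2 ≤ (∫ x in a..b, g x) * ∫ x in a..b, f x ^ 2 / g x := by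
  simp only [intervalIntegral.integral_of_le hab]
  exact sq_integral_le_integral_mul_integral_sq_div
    (ae_restrict_of_forall_mem measurableSet_Ioc fun x hx => hg_pos x (Ioc_subset_Icc_self hx))
    (hg.integrableOn_Icc.mono_set Ioc_subset_Icc_self) (hfg.mono_set Ioc_subset_Icc_self)

theorem integral_mul_primitive_swap {μ : Measure ℝ} [SFinite μ] [NullSingletonClass μ] {a b : ℝ}
    {φ ψ : ℝ → ℝ} (hab : a ≤ b) (hφ : IntegrableOn φ (Ioc a b) μ)
    (hψ : IntegrableOn ψ (Ioc a b) μ) :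
    ∫ x in a..b, φ x * (∫ t in a..x, ψ t ∂μ) ∂μ = ∫ t in a..b, ψ t * (∫ x in t..b, φ x ∂μ) ∂μ := by
  set W : ℝ → ℝ → ℝ := fun x t => {q : ℝ × ℝ | q.2 ≤ q.1}.indicator (fun q => φ q.1 * ψ q.2) (x, t)
  have hW : Integrable (Function.uncurry W) ((μ.restrict (Ioc a b)).prod (μ.restrict (Ioc a b))) :=
    (hφ.mul_prod hψ).indicator (measurableSet_le measurable_snd measurable_fst)
  have hx : ∀ x ∈ Ioc a b, ∫ t in Ioc a b, W x t ∂μ = φ x * ∫ t in a..x, ψ t ∂μ := by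
    intro x hx
    have hsec : (fun t => W x t) = (Iic x).indicator (fun t => φ x * ψ t) := by
      ext t; simp [W, indicator_apply]
    rw [hsec, integral_indicator measurableSet_Iic, Measure.restrict_restrict measurableSet_Iic,
      Iic_inter_Ioc_of_le hx.2, integral_const_mul, intervalIntegral.integral_of_le hx.1.le]
  have ht : ∀ t ∈ Ioc a b, ∫ x in Ioc a b, W x t ∂μ = ψ t * ∫ x in t..b, φ x ∂μ := by
    intro t ht
    have hsec : (fun x => W x t) = (Ici t).indicator (fun x => φ x * ψ t) := by
      ext x; simp [W, indicator_apply]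
    have hset : Ici t ∩ Ioc a b = Icc t b := by
      ext x; simp only [mem_inter_iff, mem_Ici, mem_Ioc, mem_Icc]
      constructor
      · rintro ⟨h1, -, h3⟩; exact ⟨h1, h3⟩
      · rintro ⟨h1, h2⟩; exact ⟨h1, ht.1.trans_le h1, h2⟩
    rw [hsec, integral_indicator measurableSet_Ici, Measure.restrict_restrict measurableSet_Ici,
      hset, integral_mul_const, mul_comm, integral_Icc_eq_integral_Ioc,
      intervalIntegral.integral_of_le ht.2]
  rw [intervalIntegral.integral_of_le hab, intervalIntegral.integral_of_le hab,
    ← setIntegral_congr_fun measurableSet_Ioc hx, integral_integral_swap hW,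
    setIntegral_congr_fun measurableSet_Ioc ht]

theorem integral_mul_sq_primitive_le_of_kernel_bound {a b C : ℝ} {f g w : ℝ → ℝ} (hab : a ≤ b)
    (hg : ContinuousOn g (Icc a b)) (hg_pos : ∀ x ∈ Icc a b, 0 < g x)
    (hw : ContinuousOn w (Icc a b)) (hw_nonneg : ∀ x ∈ Icc a b, 0 ≤ w x)
    (hf : IntegrableOn (fun x => f x ^ 2) (Icc a b))
    (hker : ∀ t ∈ Icc a b, ∫ x in t..b, w x * ∫ s in a..x, g s ≤ C * g t) :
    ∫ x in a..b, w x * (∫ t in a..x, f t) ^ 2 ≤ C * ∫ x in a..b, f x ^ 2 := by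
  have hprim : ∀ φ : ℝ → ℝ, IntegrableOn φ (Icc a b) →
      ContinuousOn (fun x => ∫ t in a..x, φ t) (Icc a b) := fun φ hφ =>
    uIcc_of_le hab ▸ intervalIntegral.continuousOn_primitive_interval (uIcc_of_le hab ▸ hφ)
  set H : ℝ → ℝ := fun x => ∫ s in a..x, g s
  set ψ : ℝ → ℝ := fun t => f t ^ 2 / g t
  have hψ : IntegrableOn ψ (Icc a b) := by
    simpa only [ψ, div_eq_mul_inv, Pi.inv_apply] using
      hf.mul_continuousOn (hg.inv₀ fun x hx => (hg_pos x hx).ne') isCompact_Icc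
  have hwH : ContinuousOn (fun x => w x * H x) (Icc a b) := hw.mul (hprim g hg.integrableOn_Icc)
  have hCS : ∀ x ∈ Ioc a b, w x * (∫ t in a..x, f t) ^ 2 ≤ w x * H x * ∫ t in a..x, ψ t := by
    intro x hx
    have hsub : Icc a x ⊆ Icc a b := Icc_subset_Icc_right hx.2
    rw [mul_assoc]
    exact mul_le_mul_of_nonneg_left (sq_intervalIntegral_le_mul hx.1.le (hg.mono hsub)
      (fun t ht => hg_pos t (hsub ht)) (hψ.mono_set hsub)) (hw_nonneg x (Ioc_subset_Icc_self hx))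
  have hker' : ∀ t ∈ Icc a b, ψ t * ∫ x in t..b, w x * H x ≤ C * f t ^ 2 := by
    intro t ht
    calc ψ t * ∫ x in t..b, w x * H x ≤ ψ t * (C * g t) :=
          mul_le_mul_of_nonneg_left (hker t ht) (div_nonneg (sq_nonneg _) (hg_pos t ht).le)
      _ = C * f t ^ 2 := by
          simp only [ψ]
          field_simp [(hg_pos t ht).ne']
  calc ∫ x in a..b, w x * (∫ t in a..x, f t) ^ 2
      ≤ ∫ x in a..b, w x * H x * ∫ t in a..x, ψ t := by
        -- `f` need not be measurable, so the left side need not be integrable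
        simp only [intervalIntegral.integral_of_le hab]
        exact integral_mono_of_nonneg
          (ae_restrict_of_forall_mem measurableSet_Ioc fun x hx =>
            mul_nonneg (hw_nonneg x (Ioc_subset_Icc_self hx)) (sq_nonneg _))
          ((hwH.mul (hprim ψ hψ)).integrableOn_Icc.mono_set Ioc_subset_Icc_self)
          (ae_restrict_of_forall_mem measurableSet_Ioc hCS)
    _ = ∫ t in a..b, ψ t * ∫ x in t..b, w x * H x :=
        integral_mul_primitive_swap hab (hwH.integrableOn_Icc.mono_set Ioc_subset_Icc_self)
          (hψ.mono_set Ioc_subset_Icc_self)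
    _ ≤ ∫ t in a..b, C * f t ^ 2 := by
        have hK : ContinuousOn (fun t => ∫ x in t..b, w x * H x) (Icc a b) :=
          uIcc_of_le hab ▸ intervalIntegral.continuousOn_primitive_interval_left
            (uIcc_of_le hab ▸ hwH.integrableOn_Icc)
        refine intervalIntegral.integral_mono_on hab ?_ ?_ hker' <;>
          rw [intervalIntegrable_iff_integrableOn_Icc_of_le hab]
        · exact hψ.mul_continuousOn hK isCompact_Icc
        · exact hf.const_mul C
    _ = C * ∫ x in a..b, f x ^ 2 := intervalIntegral.integral_const_mul _ _

theorem hasDerivAt_rpow_mul_cos_mul_log_add (p μ c : ℝ) {x : ℝ} (hx : 0 < x) :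
    HasDerivAt (fun y => y ^ p * cos (μ * log y + c))
      (x ^ (p - 1) * (p * cos (μ * log x + c) - μ * sin (μ * log x + c))) x := by
  have hθ := (((hasDerivAt_log hx.ne').const_mul μ).add_const c).cos
  refine ((hasDerivAt_rpow_const (p := p) (Or.inl hx.ne')).mul hθ).congr_deriv ?_
  rw [rpow_sub_one hx.ne']
  field_simp
  ring

theorem hasDerivAt_rpow_mul_sin_mul_log_add (p μ c : ℝ) {x : ℝ} (hx : 0 < x) :
    HasDerivAt (fun y => y ^ p * sin (μ * log y + c))
      (x ^ (p - 1) * (p * sin (μ * log x + c) + μ * cos (μ * log x + c))) x := by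
  have hθ := (((hasDerivAt_log hx.ne').const_mul μ).add_const c).sin
  refine ((hasDerivAt_rpow_const (p := p) (Or.inl hx.ne')).mul hθ).congr_deriv ?_
  rw [rpow_sub_one hx.ne']
  field_simp

theorem integral_sq_rpow_neg_half_mul_comp {a b μ c : ℝ} (ha : 0 < a) (hb : 0 < b) (hμ : μ ≠ 0)
    {h : ℝ → ℝ} (hh : Continuous h) :
    ∫ x in a..b, (x ^ (-(1 / 2) : ℝ) * h (μ * log x + c)) ^ 2
      = μ⁻¹ * ∫ v in (μ * log a + c)..(μ * log b + c), h v ^ 2 := by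
  have hpos : ∀ x ∈ uIcc a b, 0 < x := fun x hx => (lt_min ha hb).trans_le hx.1
  rw [← intervalIntegral.integral_comp_mul_deriv (f := fun x => μ * log x + c)
    (f' := fun x => μ / x) (g := fun v => h v ^ 2) (fun x hx => by simpa [div_eq_mul_inv] using
      (((hasDerivAt_log (hpos x hx).ne').const_mul μ).add_const c))
    (continuousOn_const.div continuousOn_id fun x hx => (hpos x hx).ne') (hh.pow 2),
    ← intervalIntegral.integral_const_mul]
  refine intervalIntegral.integral_congr fun x hx => ?_
  have hsq : (x ^ (-(1 / 2) : ℝ)) ^ 2 = x⁻¹ := by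
    rw [← rpow_natCast, ← rpow_mul (hpos x hx).le]; norm_num [rpow_neg_one]
  simp only [Function.comp, mul_pow, hsq]
  field_simp

theorem integral_sq_mul_sin_add_mul_cos (p q : ℝ) :
    ∫ v in (0)..π, (p * sin v + q * cos v) ^ 2 = (p ^ 2 + q ^ 2) * π / 2 := by
  have hF : ∀ v ∈ uIcc 0 π, HasDerivAt
      (fun v => (p ^ 2 + q ^ 2) / 2 * v + (q ^ 2 - p ^ 2) / 2 * (sin v * cos v) + p * q * sin v ^ 2)
      ((p * sin v + q * cos v) ^ 2) v := by
    intro v _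
    have h := (((hasDerivAt_id v).const_mul ((p ^ 2 + q ^ 2) / 2)).add
      (((hasDerivAt_sin v).mul (hasDerivAt_cos v)).const_mul ((q ^ 2 - p ^ 2) / 2))).add
      (((hasDerivAt_sin v).pow 2).const_mul (p * q))
    refine h.congr_deriv ?_
    simp only [Nat.cast_ofNat]
    linear_combination (-(p ^ 2 + q ^ 2) / 2) * sin_sq_add_cos_sq v
  rw [intervalIntegral.integral_eq_sub_of_hasDerivAt hF
    ((by fun_prop : Continuous fun v => (p * sin v + q * cos v) ^ 2).intervalIntegrable _ _)]
  simp
  ring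

theorem mul_log_add_neg_mul_log {a x : ℝ} (ha : 0 < a) (hx : 0 < x) (μ : ℝ) :
    μ * log x + -(μ * log a) = μ * log (x / a) := by
  rw [log_div hx.ne' ha.ne']; ring

theorem inv_quarter_add_sq_le_of_hardy_inequality {a b d : ℝ} (ha : 0 < a) (hab : a < b)
    (hd : ∀ f : ℝ → ℝ, IntegrableOn (fun x => f x ^ 2) (Icc a b) →
      ∫ x in a..b, ((1 / x) * ∫ t in a..x, f t) ^ 2 ≤ d * ∫ x in a..b, f x ^ 2) :
    (1 / 4 + (π / log (b / a)) ^ 2)⁻¹ ≤ d := by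
  have hb : 0 < b := ha.trans hab
  have hpos : ∀ x ∈ Icc a b, 0 < x := fun x hx => ha.trans_le hx.1
  have hL : 0 < log (b / a) := log_pos ((one_lt_div ha).2 hab)
  set μ := π / log (b / a)
  set c := -(μ * log a)
  have hθa : μ * log a + c = 0 := by ring
  have hθb : μ * log b + c = π := by
    rw [mul_log_add_neg_mul_log ha hb]; exact div_mul_cancel₀ _ hL.ne'
  set f₀ : ℝ → ℝ := fun x =>
    x ^ (-(1 / 2) : ℝ) * (1 / 2 * sin (μ * log x + c) + μ * cos (μ * log x + c))
  have hf₀ : ContinuousOn f₀ (Icc a b) := by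
    have : ∀ x ∈ Icc a b, x ≠ 0 := fun x hx => (hpos x hx).ne'
    fun_prop (disch := assumption)
  have hF₀ : ∀ x ∈ uIcc a b,
      (1 / x) * ∫ t in a..x, f₀ t = x ^ (-(1 / 2) : ℝ) * sin (μ * log x + c) := by
    intro x hx
    rw [uIcc_of_le hab.le] at hx
    have hsub : uIcc a x ⊆ Icc a b := by
      rw [uIcc_of_le hx.1]; exact Icc_subset_Icc_right hx.2
    have hderiv : ∀ y ∈ uIcc a x,
        HasDerivAt (fun y => y ^ (1 / 2 : ℝ) * sin (μ * log y + c)) (f₀ y) y := fun y hy => by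
      have h := hasDerivAt_rpow_mul_sin_mul_log_add (1 / 2) μ c (hpos y (hsub hy))
      rwa [show (1 / 2 : ℝ) - 1 = -(1 / 2) by norm_num] at h
    rw [intervalIntegral.integral_eq_sub_of_hasDerivAt hderiv (hf₀.mono hsub).intervalIntegrable,
      hθa, sin_zero, mul_zero, sub_zero, ← mul_assoc, one_div, ← rpow_neg_one,
      ← rpow_add (hpos x hx)]
    norm_num
  have h := hd f₀ (hf₀.pow 2).integrableOn_Icc
  rw [intervalIntegral.integral_congr fun x hx => congrArg (· ^ 2) (hF₀ x hx),
    integral_sq_rpow_neg_half_mul_comp ha hb (div_pos pi_pos hL).ne' continuous_sin,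
    integral_sq_rpow_neg_half_mul_comp (h := fun v => 1 / 2 * sin v + μ * cos v) ha hb
      (div_pos pi_pos hL).ne' (by fun_prop),
    hθa, hθb, integral_sin_sq, integral_sq_mul_sin_add_mul_cos] at h
  have hk : 0 < μ⁻¹ * (π / 2) := by positivity
  rw [inv_le_iff_one_le_mul₀ (by positivity)]
  simp only [sin_zero, cos_zero, sin_pi, cos_pi, sub_zero] at h
  nlinarith

noncomputable def cosWeight (μ c x : ℝ) : ℝ := x ^ (-(1 / 2) : ℝ) * cos (μ * log x + c)

noncomputable def cosWeightPrimitive (μ c x : ℝ) : ℝ :=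
  (1 / 4 + μ ^ 2)⁻¹ *
    (x ^ (1 / 2 : ℝ) * cos (μ * log x + c) / 2 + μ * (x ^ (1 / 2 : ℝ) * sin (μ * log x + c)))

theorem continuousOn_cosWeight {a b : ℝ} (ha : 0 < a) (μ c : ℝ) :
    ContinuousOn (cosWeight μ c) (Icc a b) := by
  have : ∀ x ∈ Icc a b, x ≠ 0 := fun x hx => (ha.trans_le hx.1).ne'
  unfold cosWeight
  fun_prop (disch := assumption)

theorem hasDerivAt_cosWeightPrimitive (μ c : ℝ) {x : ℝ} (hx : 0 < x) :
    HasDerivAt (cosWeightPrimitive μ c) (cosWeight μ c x) x := by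
  have h := (((hasDerivAt_rpow_mul_cos_mul_log_add (1 / 2) μ c hx).div_const 2).add
    ((hasDerivAt_rpow_mul_sin_mul_log_add (1 / 2) μ c hx).const_mul μ)).const_mul (1 / 4 + μ ^ 2)⁻¹
  refine h.congr_deriv ?_
  have hC : (1 / 4 + μ ^ 2)⁻¹ * (1 / 4 + μ ^ 2) = 1 := inv_mul_cancel₀ (by positivity)
  rw [cosWeight, show (1 / 2 : ℝ) - 1 = -(1 / 2) by norm_num]
  linear_combination (x ^ (-(1 / 2) : ℝ) * cos (μ * log x + c)) * hC

theorem hasDerivAt_neg_cosWeight_add_inv (μ c K : ℝ) {x : ℝ} (hx : 0 < x) :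
    HasDerivAt (fun y => -(1 / 4 + μ ^ 2)⁻¹ * cosWeight μ c y + K * y⁻¹)
      ((1 / x) ^ 2 * (cosWeightPrimitive μ c x - K)) x := by
  have h := ((hasDerivAt_rpow_mul_cos_mul_log_add (-(1 / 2)) μ c hx).const_mul
    (-(1 / 4 + μ ^ 2)⁻¹)).add ((hasDerivAt_inv hx.ne').const_mul K)
  refine h.congr_deriv ?_
  have : x ^ (-(1 / 2) - 1 : ℝ) = x ^ (1 / 2 : ℝ) * (1 / x) ^ 2 := by
    rw [show (-(1 / 2) - 1 : ℝ) = 1 / 2 - 2 by norm_num, rpow_sub hx, rpow_two]; ring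
  rw [cosWeightPrimitive, this]
  field_simp
  ring

theorem integral_inv_sq_mul_integral_cosWeight_le {a b μ c t : ℝ} (ha : 0 < a)
    (hθb : 0 ≤ cos (μ * log b + c))
    (hθa : 0 ≤ cos (μ * log a + c) / 2 + μ * sin (μ * log a + c)) (ht : t ∈ Icc a b) :
    ∫ x in t..b, (1 / x) ^ 2 * ∫ s in a..x, cosWeight μ c s
      ≤ (1 / 4 + μ ^ 2)⁻¹ * cosWeight μ c t := by
  have hpos : ∀ x ∈ Icc a b, 0 < x := fun x hx => ha.trans_le hx.1
  have htb : Icc t b ⊆ Icc a b := Icc_subset_Icc_left ht.1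
  have hne : ∀ x ∈ Icc t b, x ≠ 0 := fun x hx => (hpos x (htb hx)).ne'
  have hP : ContinuousOn (cosWeightPrimitive μ c) (Icc t b) := fun x hx =>
    (hasDerivAt_cosWeightPrimitive μ c (hpos x (htb hx))).continuousAt.continuousWithinAt
  have hH : ∀ x ∈ uIcc t b,
      ∫ s in a..x, cosWeight μ c s = cosWeightPrimitive μ c x - cosWeightPrimitive μ c a := by
    intro x hx
    rw [uIcc_of_le ht.2] at hx
    have hsub : uIcc a x ⊆ Icc a b := by
      rw [uIcc_of_le (ht.1.trans hx.1)]; exact Icc_subset_Icc_right hx.2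
    exact intervalIntegral.integral_eq_sub_of_hasDerivAt
      (fun y hy => hasDerivAt_cosWeightPrimitive μ c (hpos y (hsub hy)))
      ((continuousOn_cosWeight ha μ c).mono hsub).intervalIntegrable
  have hPa : 0 ≤ cosWeightPrimitive μ c a := by
    have : cosWeightPrimitive μ c a = (1 / 4 + μ ^ 2)⁻¹ * a ^ (1 / 2 : ℝ) *
        (cos (μ * log a + c) / 2 + μ * sin (μ * log a + c)) := by
      rw [cosWeightPrimitive]; ring
    rw [this]
    exact mul_nonneg (by positivity) hθa
  have hwb : 0 ≤ (1 / 4 + μ ^ 2)⁻¹ * cosWeight μ c b :=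
    mul_nonneg (by positivity)
      (mul_nonneg (rpow_nonneg (hpos b (htb (right_mem_Icc.2 ht.2))).le _) hθb)
  have hinv : cosWeightPrimitive μ c a * b⁻¹ ≤ cosWeightPrimitive μ c a * t⁻¹ :=
    mul_le_mul_of_nonneg_left (inv_anti₀ (hpos t ht) ht.2) hPa
  rw [intervalIntegral.integral_congr fun x hx => congrArg _ (hH x hx),
    intervalIntegral.integral_eq_sub_of_hasDerivAt
      (fun x hx => hasDerivAt_neg_cosWeight_add_inv μ c _ (hpos x (htb (uIcc_of_le ht.2 ▸ hx))))
      (ContinuousOn.intervalIntegrable (uIcc_of_le ht.2 ▸ (by fun_prop (disch := assumption))))]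
  linarith

theorem hardy_inequality {a b : ℝ} (ha : 0 < a) (hab : a < b) (f : ℝ → ℝ)
    (hf : IntegrableOn (fun x => f x ^ 2) (Icc a b)) :
    ∫ x in a..b, ((1 / x) * ∫ t in a..x, f t) ^ 2
      ≤ (1 / 4 + (1 / log (b / a)) ^ 2)⁻¹ * ∫ x in a..b, f x ^ 2 := by
  have hpos : ∀ x ∈ Icc a b, 0 < x := fun x hx => ha.trans_le hx.1
  have hL : 0 < log (b / a) := log_pos ((one_lt_div ha).2 hab)
  set μ := 1 / log (b / a)
  set c := -(μ * log a)
  have hθ : ∀ x ∈ Icc a b, 0 ≤ μ * log x + c ∧ μ * log x + c ≤ 1 := by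
    intro x hx
    rw [mul_log_add_neg_mul_log ha (hpos x hx), div_mul_eq_mul_div, one_mul]
    refine ⟨div_nonneg (log_nonneg ((one_le_div ha).2 hx.1)) hL.le, (div_le_one hL).2 ?_⟩
    exact log_le_log (div_pos (hpos x hx) ha) (div_le_div_of_nonneg_right hx.2 ha.le)
  have hcos : ∀ x ∈ Icc a b, 0 < cos (μ * log x + c) := fun x hx =>
    cos_pos_of_mem_Ioo ⟨by linarith [pi_pos, (hθ x hx).1], by linarith [pi_gt_three, (hθ x hx).2]⟩
  have hne : ∀ x ∈ Icc a b, x ≠ 0 := fun x hx => (hpos x hx).ne'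
  simp_rw [mul_pow]
  refine integral_mul_sq_primitive_le_of_kernel_bound hab.le (continuousOn_cosWeight ha μ c)
    (fun x hx => mul_pos (rpow_pos_of_pos (hpos x hx) _) (hcos x hx))
    (by fun_prop (disch := assumption)) (fun x _ => sq_nonneg _) hf fun t ht => ?_
  refine integral_inv_sq_mul_integral_cosWeight_le ha (hcos b ⟨hab.le, le_rfl⟩).le ?_ ht
  simp [c]

theorem four_sub_div_sq_le_inv_quarter_add_sq (p : ℝ) {L : ℝ} (hL : L ≠ 0) :
    4 - 16 * p ^ 2 / L ^ 2 ≤ (1 / 4 + (p / L) ^ 2)⁻¹ := by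
  have h : (1 / 4 + (p / L) ^ 2)⁻¹ - (4 - 16 * p ^ 2 / L ^ 2)
      = 64 * p ^ 4 / (L ^ 2 * (L ^ 2 + 4 * p ^ 2)) := by
    field_simp
    ring
  linarith [show 0 ≤ 64 * p ^ 4 / (L ^ 2 * (L ^ 2 + 4 * p ^ 2)) by positivity]

theorem inv_quarter_add_inv_sq_le {L : ℝ} (hL : 1 ≤ L) :
    (1 / 4 + (1 / L) ^ 2)⁻¹ ≤ 4 - 2 / L ^ 2 := by
  have h : 4 - 2 / L ^ 2 - (1 / 4 + (1 / L) ^ 2)⁻¹ = (14 * L ^ 2 - 8) / (L ^ 2 * (L ^ 2 + 4)) := by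
    field_simp
    ring
  linarith [show 0 ≤ (14 * L ^ 2 - 8) / (L ^ 2 * (L ^ 2 + 4)) from
    div_nonneg (by nlinarith) (by positivity)]

theorem hardyConst_asymptotics :
    ∃ c₁ > (0 : ℝ), ∃ c₂ > (0 : ℝ), ∀ a b : ℝ, 0 < a → a < b →
      1 ≤ Real.log (b / a) →
        4 - c₁ / (Real.log (b / a)) ^ 2 ≤ hardyConst a b ∧
        hardyConst a b ≤ 4 - c₂ / (Real.log (b / a)) ^ 2 := by
  refine ⟨16 * π ^ 2, by positivity, 2, by norm_num, fun a b ha hab hL => ?_⟩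
  have hup := hardy_inequality ha hab
  have hlow := fun d => inv_quarter_add_sq_le_of_hardy_inequality (d := d) ha hab
  exact ⟨(four_sub_div_sq_le_inv_quarter_add_sq π (zero_lt_one.trans_le hL).ne').trans
      (le_csInf ⟨_, hup⟩ hlow),
    (csInf_le ⟨_, hlow⟩ hup).trans (inv_quarter_add_inv_sq_le hL)⟩
end

section
/- Let $n\ge 1$ and let $d_n$ be the smallest constant such that $\sum_{k=1}^{n}\big(\frac{1}{k}\sum_{j=1}^{k}a_j\big)^2 \le d_n\sum_{k=1}^{n}a_k^2$ holds for all real numbers $a_1,\dots,a_n$. Then $d_n \ge 4-\frac{16\pi^2}{\ln^2(n+1)}$. -/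
open Real Finset

/-!
Test the inequality with `L = log (n + 1)`, `w = π / (L + 2)` and the partial sums
`A_k = F k`, where `F x = √x sin (w log x)`: the primitive `√x` of the extremal `x^{-1/2}` of
the continuous Hardy inequality, cut off by a sine on the logarithmic scale. Then
`∑ (A_k / k)² = ∑ sin² (w log k) / k` is at least `∫₀ᴸ sin² (w u) du - 6 w²`, while
Cauchy–Schwarz on each `[k - 1, k]` gives
`∑ a_k² ≤ ∫₁ⁿ F'² ≤ ∫₀ᴸ (sin (w u) / 2 + w cos (w u))² du`. Both integrals are explicit, and
`w (L + 2) = π` makes `sin (w L)` of order `w`, so their ratio is at least `4 - 16 π² / L²`.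
For small `n`, where this is below `1`, the test sequence `e₁` suffices.
-/

lemma sum_Icc_one_sub_sub_one (f : ℝ → ℝ) (n : ℕ) :
    ∑ k ∈ Icc 1 n, (f k - f (k - 1)) = f n - f 0 := by
  induction n with
  | zero => simp
  | succ m ih =>
    rw [sum_Icc_succ_top (by omega), ih]
    push_cast
    rw [add_sub_cancel_right]
    ring

lemma le_of_hasDerivAt_nonneg {φ φ' : ℝ → ℝ} {a b : ℝ} (hab : a ≤ b)
    (hφ : ∀ x ∈ Set.Icc a b, HasDerivAt φ (φ' x) x) (hφ' : ∀ x ∈ Set.Ioo a b, 0 ≤ φ' x) :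
    φ a ≤ φ b := by
  have hmono : MonotoneOn φ (Set.Icc a b) := by
    refine monotoneOn_of_hasDerivWithinAt_nonneg (f' := φ') (convex_Icc a b)
      (fun x hx => (hφ x hx).continuousAt.continuousWithinAt) (fun x hx => ?_) ?_
    · rw [interior_Icc] at hx ⊢
      exact (hφ x (Set.Ioo_subset_Icc_self hx)).hasDerivWithinAt
    · simpa only [interior_Icc] using hφ'
  exact hmono (Set.left_mem_Icc.2 hab) (Set.right_mem_Icc.2 hab) hab

/-- Cauchy–Schwarz for `∫ₐᵇ f` stated through primitives `F' = f`, `H' = f²`. -/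
lemma sq_sub_le_mul_sub_of_hasDerivAt {F H f : ℝ → ℝ} {a b : ℝ} (hab : a ≤ b)
    (hF : ∀ x ∈ Set.Icc a b, HasDerivAt F (f x) x)
    (hH : ∀ x ∈ Set.Icc a b, HasDerivAt H (f x ^ 2) x) :
    (F b - F a) ^ 2 ≤ (b - a) * (H b - H a) := by
  -- `0 ≤ ∫ₐˣ (f x - f u)² du`
  have hpointwise : ∀ x ∈ Set.Icc a b,
      0 ≤ f x ^ 2 * (x - a) + (H x - H a) - 2 * (F x - F a) * f x := by
    rintro x ⟨hax, hxb⟩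
    have h := le_of_hasDerivAt_nonneg
      (φ := fun u => -(f x ^ 2 * (x - u) + (H x - H u) - 2 * (F x - F u) * f x))
      (φ' := fun u => (f x - f u) ^ 2) hax (fun u hu => ?_) (fun u _ => sq_nonneg _)
    · simpa using h
    have hu' : u ∈ Set.Icc a b := ⟨hu.1, hu.2.trans hxb⟩
    have := ((((hasDerivAt_id' u).const_sub x).const_mul (f x ^ 2)).add
      ((hH u hu').const_sub (H x))).sub
      ((((hF u hu').const_sub (F x)).const_mul 2).mul_const (f x)) |>.neg
    exact this.congr_deriv (by ring)
  have h := le_of_hasDerivAt_nonneg (φ := fun x => (H x - H a) * (x - a) - (F x - F a) ^ 2)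
    hab (fun x hx => ?_) (fun x hx => hpointwise x (Set.Ioo_subset_Icc_self hx))
  · simp only [sub_self, mul_zero, ne_eq, OfNat.ofNat_ne_zero, not_false_eq_true, zero_pow] at h
    linarith
  have := (((hH x hx).sub_const (H a)).mul ((hasDerivAt_id' x).sub_const a)).sub
    (((hF x hx).sub_const (F a)).pow 2)
  exact this.congr_deriv (by ring)

lemma sq_sin_sub_sq_sin_le {x y : ℝ} (hx : 0 ≤ x) (hy : 0 ≤ y) :
    sin x ^ 2 - sin y ^ 2 ≤ |x - y| * (x + y) := by
  have hsum : |sin x + sin y| ≤ x + y := by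
    calc |sin x + sin y| ≤ |sin x| + |sin y| := abs_add_le _ _
      _ ≤ |x| + |y| := add_le_add abs_sin_le_abs abs_sin_le_abs
      _ = x + y := by rw [abs_of_nonneg hx, abs_of_nonneg hy]
  calc sin x ^ 2 - sin y ^ 2 = (sin x - sin y) * (sin x + sin y) := by ring
    _ ≤ |sin x - sin y| * |sin x + sin y| := by rw [← abs_mul]; exact le_abs_self _
    _ ≤ |x - y| * (x + y) :=
      mul_le_mul (abs_sin_sub_sin_le x y) hsum (abs_nonneg _) (abs_nonneg _)

lemma log_add_one_le_two_mul_sqrt {x : ℝ} (hx : 0 ≤ x) : log (x + 1) ≤ 2 * √x := by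
  have hsq : x + 1 ≤ (√x + 1) ^ 2 := by nlinarith [sq_sqrt hx, sqrt_nonneg x]
  calc log (x + 1) ≤ log ((√x + 1) ^ 2) := log_le_log (by linarith) hsq
    _ = 2 * log (√x + 1) := by rw [log_pow]; norm_num
    _ ≤ 2 * √x := by
      have := log_le_sub_one_of_pos (show 0 < √x + 1 by positivity)
      linarith

lemma log_add_one_sub_log_le {x : ℝ} (hx : 0 < x) : log (x + 1) - log x ≤ 1 / x := by
  rw [← log_div (by linarith) hx.ne']
  exact (log_le_sub_one_of_pos (by positivity)).trans_eq (by field_simp; ring)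

lemma sum_sqrt_div_sq_le (n : ℕ) : ∑ k ∈ Icc 1 n, √k / (k : ℝ) ^ 2 ≤ 3 - 2 / √n := by
  induction n with
  | zero => simp
  | succ m ih =>
    rw [sum_Icc_succ_top (by omega)]
    rcases Nat.eq_zero_or_pos m with rfl | hm
    · norm_num
    have hm' : (1 : ℝ) ≤ m := by exact_mod_cast hm
    have hstep : √(m + 1 : ℝ) / ((m : ℝ) + 1) ^ 2 ≤ 2 / √m - 2 / √(m + 1 : ℝ) := by
      have hs : 0 < √(m : ℝ) := sqrt_pos.2 (by linarith)
      have hs1 : √(m : ℝ) ≤ √(m + 1 : ℝ) := sqrt_le_sqrt (by linarith)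
      have hsq : √(m : ℝ) ^ 2 = m := sq_sqrt (by linarith)
      have hsq1 : √(m + 1 : ℝ) ^ 2 = m + 1 := sq_sqrt (by linarith)
      rw [div_sub_div _ _ hs.ne' (by positivity), div_le_div_iff₀ (by positivity) (by positivity)]
      nlinarith [mul_pos hs hs, sq_nonneg (√(m + 1 : ℝ) - √m),
        mul_le_mul_of_nonneg_left hs1 (mul_pos hs hs).le]
    push_cast
    linarith

noncomputable def hardyTest (w x : ℝ) : ℝ := √x * sin (w * log x)

/-- `∫₀ᵗ sin² (w u) du`. -/
noncomputable def sinSqPrimitive (w t : ℝ) : ℝ := t / 2 - sin (2 * (w * t)) / (4 * w)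

/-- `∫₀ᵗ (sin (w u) / 2 + w cos (w u))² du`; after the substitution `x = eᵘ` this is the
energy `∫₁^(eᵗ) (hardyTest w)'(x)² dx`. -/
noncomputable def hardyEnergy (w t : ℝ) : ℝ :=
  t / 8 - sin (2 * (w * t)) / (16 * w) + sin (w * t) ^ 2 / 2 + w ^ 2 * t / 2
    + w * sin (2 * (w * t)) / 4

section TestSequence

variable {w L : ℝ}

lemma hasDerivAt_hardyTest (w : ℝ) {x : ℝ} (hx : 0 < x) :
    HasDerivAt (hardyTest w) ((sin (w * log x) / 2 + w * cos (w * log x)) / √x) x := by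
  have hsqrt : √x * √x = x := mul_self_sqrt hx.le
  refine ((hasDerivAt_sqrt hx.ne').mul ((hasDerivAt_log hx.ne').const_mul w).sin).congr_deriv ?_
  field_simp
  linear_combination (2 * w * cos (w * log x)) * hsqrt

lemma sinSqPrimitive_zero : sinSqPrimitive w 0 = 0 := by simp [sinSqPrimitive]

lemma hasDerivAt_sinSqPrimitive (hw : w ≠ 0) (t : ℝ) :
    HasDerivAt (sinSqPrimitive w) (sin (w * t) ^ 2) t := by
  have hwt : HasDerivAt (fun u => 2 * (w * u)) (2 * w) t := by
    simpa using ((hasDerivAt_id t).const_mul w).const_mul 2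
  refine (((hasDerivAt_id' t).div_const 2).sub (hwt.sin.div_const (4 * w))).congr_deriv ?_
  rw [cos_two_mul, cos_sq']
  field_simp
  ring

lemma hasDerivAt_hardyEnergy (hw : w ≠ 0) (t : ℝ) :
    HasDerivAt (hardyEnergy w) ((sin (w * t) / 2 + w * cos (w * t)) ^ 2) t := by
  have hw1 : HasDerivAt (fun u => w * u) w t := by simpa using (hasDerivAt_id t).const_mul w
  have hw2 : HasDerivAt (fun u => 2 * (w * u)) (2 * w) t := by simpa using hw1.const_mul 2
  refine ((((((hasDerivAt_id' t).div_const 8).sub (hw2.sin.div_const (16 * w))).add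
    ((hw1.sin.pow 2).div_const 2)).add (((hasDerivAt_id' t).const_mul (w ^ 2)).div_const 2)).add
    ((hw2.sin.const_mul w).div_const 4)).congr_deriv ?_
  rw [cos_two_mul]
  field_simp
  linear_combination -512 * sin_sq_add_cos_sq (w * t)

lemma hasDerivAt_hardyEnergy_log (hw : w ≠ 0) {x : ℝ} (hx : 0 < x) :
    HasDerivAt (fun y => hardyEnergy w (log y))
      (((sin (w * log x) / 2 + w * cos (w * log x)) / √x) ^ 2) x := by
  refine ((hasDerivAt_hardyEnergy hw (log x)).comp x (hasDerivAt_log hx.ne')).congr_deriv ?_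
  rw [div_pow, sq_sqrt hx.le]
  ring

lemma sq_hardyTest_sub_le (hw : w ≠ 0) {k : ℕ} (hk : 1 ≤ k) :
    (hardyTest w k - hardyTest w (k - 1)) ^ 2
      ≤ hardyEnergy w (log k) - hardyEnergy w (log (k - 1)) := by
  rcases hk.eq_or_lt with rfl | hk
  · simp [hardyTest, hardyEnergy]
  have hk' : (1 : ℝ) ≤ k - 1 := by
    have : (2 : ℝ) ≤ k := by exact_mod_cast hk
    linarith
  have hpos : ∀ x ∈ Set.Icc ((k : ℝ) - 1) k, 0 < x := fun x hx => by linarith [hx.1]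
  simpa using sq_sub_le_mul_sub_of_hasDerivAt (by linarith)
    (fun x hx => hasDerivAt_hardyTest w (hpos x hx))
    (fun x hx => hasDerivAt_hardyEnergy_log hw (hpos x hx))

lemma sinSqPrimitive_sub_le (hw : 0 < w) {a b : ℝ} (ha : 0 ≤ a) (hab : a ≤ b) :
    sinSqPrimitive w b - sinSqPrimitive w a
      ≤ sin (w * a) ^ 2 * (b - a) + w ^ 2 * b * (b - a) ^ 2 := by
  have h := le_of_hasDerivAt_nonneg
    (φ := fun t => sin (w * a) ^ 2 * t + w ^ 2 * b * (t - a) ^ 2 - sinSqPrimitive w t)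
    (φ' := fun t => sin (w * a) ^ 2 + w ^ 2 * b * (2 * (t - a)) - sin (w * t) ^ 2) hab
    (fun t _ => ?_) (fun t ht => ?_)
  · simp only [sub_self, ne_eq, OfNat.ofNat_ne_zero, not_false_eq_true, zero_pow, mul_zero,
      add_zero] at h
    linarith
  · exact ((((hasDerivAt_id' t).const_mul _).add
      ((((hasDerivAt_id' t).sub_const a).pow 2).const_mul _)).sub
      (hasDerivAt_sinSqPrimitive hw.ne' t)).congr_deriv (by ring)
  · have hat : a ≤ t := ht.1.le
    have := sq_sin_sub_sq_sin_le (mul_nonneg hw.le (ha.trans hat)) (mul_nonneg hw.le ha)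
    rw [← mul_sub, abs_mul, abs_of_pos hw, abs_of_nonneg (by linarith : 0 ≤ t - a)] at this
    nlinarith [mul_nonneg (mul_nonneg hw.le hw.le) (by linarith : 0 ≤ t - a),
      mul_le_mul_of_nonneg_left (by linarith [ht.2] : t + a ≤ 2 * b)
        (mul_nonneg (mul_nonneg hw.le hw.le) (by linarith : 0 ≤ t - a))]

lemma sinSqPrimitive_log_add_one_sub_le (hw : 0 < w) {x : ℝ} (hx : 1 ≤ x) :
    sinSqPrimitive w (log (x + 1)) - sinSqPrimitive w (log x)
      ≤ sin (w * log x) ^ 2 / x + 2 * w ^ 2 * (√x / x ^ 2) := by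
  have hx0 : 0 < x := by linarith
  have hlog_le : log x ≤ log (x + 1) := log_le_log hx0 (by linarith)
  have hδ := log_add_one_sub_log_le hx0
  have hδ0 : 0 ≤ log (x + 1) - log x := sub_nonneg.2 hlog_le
  have hlog := log_add_one_le_two_mul_sqrt hx0.le
  have h := sinSqPrimitive_sub_le hw (log_nonneg hx) hlog_le
  have hmain : sin (w * log x) ^ 2 * (log (x + 1) - log x) ≤ sin (w * log x) ^ 2 / x := by
    rw [div_eq_mul_one_div]
    exact mul_le_mul_of_nonneg_left hδ (sq_nonneg _)
  have herr : w ^ 2 * log (x + 1) * (log (x + 1) - log x) ^ 2 ≤ 2 * w ^ 2 * (√x / x ^ 2) := by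
    calc w ^ 2 * log (x + 1) * (log (x + 1) - log x) ^ 2
        ≤ w ^ 2 * (2 * √x) * (1 / x) ^ 2 := by gcongr
      _ = 2 * w ^ 2 * (√x / x ^ 2) := by ring
  linarith

lemma sinSqPrimitive_log_sub_le_sum (hw : 0 < w) (n : ℕ) :
    sinSqPrimitive w (log (n + 1)) - 6 * w ^ 2 ≤ ∑ k ∈ Icc 1 n, sin (w * log k) ^ 2 / k := by
  have htel : ∑ k ∈ Icc 1 n, (sinSqPrimitive w (log (k + 1)) - sinSqPrimitive w (log k))
      = sinSqPrimitive w (log (n + 1)) := by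
    simpa [sinSqPrimitive_zero] using
      sum_Icc_one_sub_sub_one (fun x => sinSqPrimitive w (log (x + 1))) n
  have hsum := sum_le_sum fun k (hk : k ∈ Icc 1 n) =>
    sinSqPrimitive_log_add_one_sub_le hw (x := k) (by exact_mod_cast (mem_Icc.1 hk).1)
  have herr : ∑ k ∈ Icc 1 n, 2 * w ^ 2 * (√k / (k : ℝ) ^ 2) ≤ 6 * w ^ 2 := by
    rw [← mul_sum]
    nlinarith [sum_sqrt_div_sq_le n, div_nonneg zero_le_two (sqrt_nonneg (n : ℝ)), sq_nonneg w]
  rw [sum_add_distrib, htel] at hsum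
  linarith

lemma sum_sq_hardyTest_sub_le (hw : 0 < w) (n : ℕ) :
    ∑ k ∈ Icc 1 n, (hardyTest w k - hardyTest w (k - 1)) ^ 2 ≤ hardyEnergy w (log (n + 1)) := by
  have hmono : Monotone (hardyEnergy w) :=
    monotone_of_hasDerivAt_nonneg (hasDerivAt_hardyEnergy hw.ne') fun t => sq_nonneg _
  calc ∑ k ∈ Icc 1 n, (hardyTest w k - hardyTest w (k - 1)) ^ 2
      ≤ ∑ k ∈ Icc 1 n, (hardyEnergy w (log k) - hardyEnergy w (log (k - 1))) :=
        sum_le_sum fun k hk => sq_hardyTest_sub_le hw.ne' (mem_Icc.1 hk).1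
    _ = hardyEnergy w (log n) := by
        rw [sum_Icc_one_sub_sub_one (fun x => hardyEnergy w (log x))]
        simp [hardyEnergy]
    _ ≤ hardyEnergy w (log (n + 1)) := by
        rcases (Nat.zero_le n).eq_or_lt with rfl | hn
        · simp
        exact hmono (log_le_log (by exact_mod_cast hn) (by linarith))

lemma hardy_lhs_hardyTest (w : ℝ) (n : ℕ) :
    ∑ k ∈ Icc 1 n, (1 / (k : ℝ) * ∑ j ∈ Icc 1 k, (hardyTest w j - hardyTest w (j - 1))) ^ 2
      = ∑ k ∈ Icc 1 n, sin (w * log k) ^ 2 / k := by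
  refine sum_congr rfl fun k hk => ?_
  have hk : (0 : ℝ) < k := by exact_mod_cast (mem_Icc.1 hk).1
  rw [sum_Icc_one_sub_sub_one (hardyTest w), hardyTest, hardyTest, sqrt_zero, zero_mul,
    sub_zero, mul_pow, mul_pow, sq_sqrt hk.le]
  field_simp

lemma sin_mul_eq_of_mul_add_two_eq_pi (hπ : w * (L + 2) = π) :
    sin (w * L) = sin (2 * w) ∧ sin (2 * (w * L)) = -sin (4 * w) := by
  have hwL : w * L = π - 2 * w := by linarith
  refine ⟨by rw [hwL, sin_pi_sub], ?_⟩
  rw [hwL, show 2 * (π - 2 * w) = 2 * π - 4 * w by ring, sin_two_pi_sub]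

lemma hardyEnergy_eq_of_mul_add_two_eq_pi (hπ : w * (L + 2) = π) :
    hardyEnergy w L = L / 8 + w ^ 2 * L / 2 + sin (2 * w) ^ 2 / 2
      + sin (4 * w) / (16 * w) - w * sin (4 * w) / 4 := by
  obtain ⟨h1, h2⟩ := sin_mul_eq_of_mul_add_two_eq_pi hπ
  rw [hardyEnergy, h1, h2]
  ring

lemma sinSqPrimitive_eq_of_mul_add_two_eq_pi (hπ : w * (L + 2) = π) :
    sinSqPrimitive w L = L / 2 + sin (4 * w) / (4 * w) := by
  rw [sinSqPrimitive, (sin_mul_eq_of_mul_add_two_eq_pi hπ).2]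
  ring

lemma sin_four_mul_nonneg (hw : 0 < w) (hw2 : w ≤ 1 / 2) : 0 ≤ sin (4 * w) :=
  sin_nonneg_of_nonneg_of_le_pi (by positivity) (by linarith [pi_gt_three])

lemma le_hardyEnergy (hw : 0 < w) (hw2 : w ≤ 1 / 2) (hπ : w * (L + 2) = π) :
    L / 8 ≤ hardyEnergy w L := by
  have hL : 0 ≤ L := by nlinarith [pi_gt_three]
  have hs := sin_four_mul_nonneg hw hw2
  rw [hardyEnergy_eq_of_mul_add_two_eq_pi hπ]
  have : w * sin (4 * w) / 4 ≤ sin (4 * w) / (16 * w) := by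
    have hw4 : 4 * w ^ 2 ≤ 1 := by nlinarith
    rw [le_div_iff₀ (by positivity)]
    nlinarith [mul_le_mul_of_nonneg_left hw4 hs]
  nlinarith [sq_nonneg (sin (2 * w)), sq_nonneg w]

lemma mul_hardyEnergy_le (hw : 0 < w) (hw2 : w ≤ 1 / 2) (hπ : w * (L + 2) = π) :
    (4 - 16 * π ^ 2 / L ^ 2) * hardyEnergy w L ≤ sinSqPrimitive w L - 6 * w ^ 2 := by
  have hL : 0 < L := by nlinarith [pi_gt_three]
  have hE := le_hardyEnergy hw hw2 hπ
  have hs := sin_ge_sub_cube (by positivity : 0 ≤ 4 * w)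
  have ht : sin (2 * w) ^ 2 ≤ (2 * w) ^ 2 := sin_sq_le_sq
  have hcoeff : 4 - 16 * π ^ 2 / L ^ 2 = 4 - 16 * w ^ 2 - 64 * w ^ 2 * (L + 1) / L ^ 2 := by
    rw [← hπ]
    field_simp
    ring
  have hcorr : 8 * w ^ 2 ≤ 64 * w ^ 2 * (L + 1) / L ^ 2 * hardyEnergy w L := by
    calc 8 * w ^ 2 ≤ 64 * w ^ 2 * (L + 1) / L ^ 2 * (L / 8) := by
          rw [show 64 * w ^ 2 * (L + 1) / L ^ 2 * (L / 8) = 8 * w ^ 2 + 8 * w ^ 2 / L by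
            field_simp; ring]
          linarith [div_nonneg (by positivity : 0 ≤ 8 * w ^ 2) hL.le]
      _ ≤ _ := by gcongr
  have hmain : sinSqPrimitive w L - (4 - 16 * w ^ 2) * hardyEnergy w L
      = sin (4 * w) * (2 * w - 4 * w ^ 3) + 8 * L * w ^ 4 - (2 - 8 * w ^ 2) * sin (2 * w) ^ 2 := by
    rw [sinSqPrimitive_eq_of_mul_add_two_eq_pi hπ, hardyEnergy_eq_of_mul_add_two_eq_pi hπ]
    field_simp
    ring
  have hcoef : 0 ≤ 2 * w - 4 * w ^ 3 := by nlinarith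
  have hmain_ge : 8 * L * w ^ 4 - 16 * w ^ 4 / 3
      ≤ sinSqPrimitive w L - (4 - 16 * w ^ 2) * hardyEnergy w L := by
    rw [hmain]
    nlinarith [mul_le_mul_of_nonneg_right hs hcoef,
      mul_le_mul_of_nonneg_left ht (by nlinarith : (0 : ℝ) ≤ 2 - 8 * w ^ 2), pow_pos hw 6]
  have hsmall : 16 * w ^ 4 / 3 ≤ 2 * w ^ 2 := by
    nlinarith [mul_le_mul_of_nonneg_left (by nlinarith : w ^ 2 ≤ 1 / 4) (sq_nonneg w)]
  rw [hcoeff, sub_mul]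
  nlinarith [pow_pos hw 4]

end TestSequence

lemma one_le_of_hardy {n : ℕ} (hn : 1 ≤ n) {c : ℝ}
    (hc : ∀ a : ℕ → ℝ, ∑ k ∈ Icc 1 n, ((1 / (k : ℝ)) * ∑ j ∈ Icc 1 k, a j) ^ 2
      ≤ c * ∑ k ∈ Icc 1 n, (a k) ^ 2) : 1 ≤ c := by
  have h1 : 1 ∈ Icc 1 n := mem_Icc.2 ⟨le_rfl, hn⟩
  set a : ℕ → ℝ := Pi.single 1 1
  calc (1 : ℝ) = (1 / ((1 : ℕ) : ℝ) * ∑ j ∈ Icc 1 1, a j) ^ 2 := by simp [a]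
    _ ≤ ∑ k ∈ Icc 1 n, (1 / (k : ℝ) * ∑ j ∈ Icc 1 k, a j) ^ 2 :=
      single_le_sum (f := fun k : ℕ => (1 / (k : ℝ) * ∑ j ∈ Icc 1 k, a j) ^ 2)
        (fun _ _ => sq_nonneg _) h1
    _ ≤ c * ∑ k ∈ Icc 1 n, a k ^ 2 := hc a
    _ = c := by simp [a, Pi.single_apply, h1]

theorem discrete_hardy_lower_bound (n : ℕ) (hn : 1 ≤ n) (d : ℝ)
    (hd : IsLeast {c : ℝ | ∀ a : ℕ → ℝ,
      ∑ k ∈ Finset.Icc 1 n, ((1 / (k : ℝ)) * ∑ j ∈ Finset.Icc 1 k, a j) ^ 2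
        ≤ c * ∑ k ∈ Finset.Icc 1 n, (a k) ^ 2} d) :
    d ≥ 4 - 16 * π ^ 2 / (Real.log (n + 1)) ^ 2 := by
  have hd1 : 1 ≤ d := one_le_of_hardy hn hd.1
  set L := log (n + 1)
  by_cases hc : 4 - 16 * π ^ 2 / L ^ 2 ≤ 1
  · linarith
  have hL : 2 * π ≤ L := by
    have hL0 : 0 < L := log_pos (by norm_cast; omega)
    rw [not_le, lt_sub_comm, div_lt_iff₀ (by positivity)] at hc
    nlinarith [pi_pos]
  have hL2 : 0 < L + 2 := by linarith [pi_pos]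
  set w := π / (L + 2)
  have hπ : w * (L + 2) = π := div_mul_cancel₀ _ hL2.ne'
  have hw : 0 < w := div_pos pi_pos hL2
  have hw2 : w ≤ 1 / 2 := by
    rw [div_le_iff₀ hL2]; linarith
  have hE := le_hardyEnergy hw hw2 hπ
  refine le_of_mul_le_mul_right ?_ (by linarith [pi_pos] : 0 < hardyEnergy w L)
  calc (4 - 16 * π ^ 2 / L ^ 2) * hardyEnergy w L ≤ sinSqPrimitive w L - 6 * w ^ 2 :=
        mul_hardyEnergy_le hw hw2 hπ
    _ ≤ ∑ k ∈ Icc 1 n, sin (w * log k) ^ 2 / k := sinSqPrimitive_log_sub_le_sum hw n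
    _ = _ := (hardy_lhs_hardyTest w n).symm
    _ ≤ d * ∑ k ∈ Icc 1 n, (hardyTest w k - hardyTest w (k - 1)) ^ 2 := hd.1 _
    _ ≤ d * hardyEnergy w L := by gcongr; exact sum_sq_hardyTest_sub_le hw n
end

section
/- Let $b>1$ and let $\alpha$ be the unique solution of $\tan(\alpha\ln b)+2\alpha=0$ in $(\pi/(2\ln b),\,\pi/\ln b)$. Then the function $h(x)=x^{-1/2}\big(2\alpha\cos(\alpha\ln x)+\sin(\alpha\ln x)\big)$ is strictly decreasing on $[1,b]$, satisfies $h(b)=0$, and $h(x)>0$ for all $x\in[1,b)$. -/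
open Real

theorem extremal_function_properties (b : ℝ) (hb : 1 < b) (α : ℝ)
    (hα : α ∈ Set.Ioo (π / (2 * Real.log b)) (π / Real.log b))
    (hroot : Real.tan (α * Real.log b) + 2 * α = 0)
    (h : ℝ → ℝ)
    (hh : ∀ x, h x = x ^ (-(1 : ℝ) / 2) *
      (2 * α * Real.cos (α * Real.log x) + Real.sin (α * Real.log x))) :
    StrictAntiOn h (Set.Icc 1 b) ∧ h b = 0 ∧ ∀ x ∈ Set.Ico (1 : ℝ) b, 0 < h x := by
  have hL : 0 < Real.log b := Real.log_pos hb
  obtain ⟨hα1, hα2⟩ := hα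
  have hαpos : 0 < α := lt_trans (by positivity) hα1
  have hαL : α * Real.log b < π := (lt_div_iff₀ hL).mp hα2
  -- trig identity at b
  have hcosb : Real.cos (α * Real.log b) ≠ 0 := by
    intro hc
    rw [Real.tan_eq_sin_div_cos, hc, div_zero] at hroot
    linarith
  have hsum : 2 * α * Real.cos (α * Real.log b) + Real.sin (α * Real.log b) = 0 := by
    have htan : Real.sin (α * Real.log b) = Real.tan (α * Real.log b) * Real.cos (α * Real.log b) := by
      rw [Real.tan_eq_sin_div_cos, div_mul_cancel₀ _ hcosb]
    rw [htan]
    have : Real.tan (α * Real.log b) = -(2 * α) := by linarith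
    rw [this]; ring
  -- derivative
  have hd : ∀ x : ℝ, 0 < x →
      HasDerivAt h (x ^ (-(3:ℝ)/2) * (-(1/2 + 2*α^2) * Real.sin (α * Real.log x))) x := by
    intro x hx
    have hlog : HasDerivAt (fun x => α * Real.log x) (α * x⁻¹) x := by
      simpa using (Real.hasDerivAt_log hx.ne').const_mul α
    have hcos : HasDerivAt (fun x => Real.cos (α * Real.log x))
        (-Real.sin (α * Real.log x) * (α * x⁻¹)) x :=
      (Real.hasDerivAt_cos _).comp x hlog
    have hsin : HasDerivAt (fun x => Real.sin (α * Real.log x))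
        (Real.cos (α * Real.log x) * (α * x⁻¹)) x :=
      (Real.hasDerivAt_sin _).comp x hlog
    have hpow : HasDerivAt (fun x : ℝ => x ^ (-(1:ℝ)/2))
        (-(1:ℝ)/2 * x ^ (-(1:ℝ)/2 - 1)) x :=
      Real.hasDerivAt_rpow_const (Or.inl hx.ne')
    have hprod := hpow.mul ((hcos.const_mul (2*α)).add hsin)
    have e1 : x ^ (-(1:ℝ)/2 - 1) = x ^ (-(3:ℝ)/2) := by norm_num
    have e2 : x ^ (-(1:ℝ)/2) * x⁻¹ = x ^ (-(3:ℝ)/2) := by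
      rw [← Real.rpow_neg_one x, ← Real.rpow_add hx]
      norm_num
    have : HasDerivAt h
        (-(1:ℝ)/2 * x ^ (-(1:ℝ)/2 - 1) * (2 * α * Real.cos (α * Real.log x) + Real.sin (α * Real.log x))
          + x ^ (-(1:ℝ)/2) * (2 * α * (-Real.sin (α * Real.log x) * (α * x⁻¹))
            + Real.cos (α * Real.log x) * (α * x⁻¹))) x := by
      have hfun : h = fun x => x ^ (-(1:ℝ)/2) *
          (2 * α * Real.cos (α * Real.log x) + Real.sin (α * Real.log x)) := funext hh
      rw [hfun]
      exact hprod
    convert this using 1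
    rw [e1]
    have : x ^ (-(1:ℝ)/2) * (2 * α * (-Real.sin (α * Real.log x) * (α * x⁻¹))
        + Real.cos (α * Real.log x) * (α * x⁻¹))
        = (x ^ (-(1:ℝ)/2) * x⁻¹) * (2 * α * (-Real.sin (α * Real.log x) * α)
        + Real.cos (α * Real.log x) * α) := by ring
    rw [this, e2]
    ring
  -- continuity
  have hcont : ContinuousOn h (Set.Icc 1 b) := fun x hx =>
    ((hd x (lt_of_lt_of_le one_pos hx.1)).continuousAt).continuousWithinAt
  -- sin positive on interior
  have hsinpos : ∀ x ∈ Set.Ioo (1:ℝ) b, 0 < Real.sin (α * Real.log x) := by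
    intro x hx
    apply Real.sin_pos_of_pos_of_lt_pi
    · exact mul_pos hαpos (Real.log_pos hx.1)
    · have : Real.log x < Real.log b := Real.log_lt_log (lt_trans zero_lt_one hx.1) hx.2
      nlinarith
  have hanti : StrictAntiOn h (Set.Icc 1 b) := by
    apply strictAntiOn_of_deriv_neg (convex_Icc 1 b) hcont
    intro x hx
    rw [interior_Icc] at hx
    have hx0 : 0 < x := lt_trans zero_lt_one hx.1
    rw [(hd x hx0).deriv]
    have := hsinpos x hx
    have hp : 0 < x ^ (-(3:ℝ)/2) := Real.rpow_pos_of_pos hx0 _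
    have hneg : -(1/2 + 2*α^2) * Real.sin (α * Real.log x) < 0 :=
      mul_neg_of_neg_of_pos (by nlinarith [sq_nonneg α]) this
    exact mul_neg_of_pos_of_neg hp hneg
  have hb0 : h b = 0 := by rw [hh b, hsum, mul_zero]
  refine ⟨hanti, hb0, fun x hx => ?_⟩
  have := hanti ⟨hx.1, le_of_lt hx.2⟩ ⟨le_of_lt (lt_of_le_of_lt hx.1 hx.2), le_refl b⟩ hx.2
  rw [hb0] at this
  exact this
end

section
/- Let $b>1$ and let $f,g:[1,b]\to\mathbb{R}$ be measurable with $f^2$ and $g^2$ integrable on $[1,b]$ and $g(x)\neq 0$ for all $x\in(1,b)$. Define $M(g,t)=\frac{1}{g^2(t)}\int_t^b\Big(\frac{1}{x^2}\int_1^x g^2(u)\,du\Big)dx$ for $t\in(1,b)$, and suppose $M(g,t)\le C$ for all $t\in(1,b)$. Then $\int_1^b\Big(\frac{1}{x}\int_1^x f(t)\,dt\Big)^2 dx \le C\int_1^b f^2(t)\,dt$. -/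
open Real MeasureTheory Set
open scoped ENNReal

/-! Writing `f = (f / g) * g`, Cauchy–Schwarz bounds `(∫₁ˣ f)²` by `(∫₁ˣ (f/g)²) (∫₁ˣ g²)`.
Integrating this against `x⁻²` and exchanging the order of integration on the triangle
`1 < t < x < b` leaves `∫₁ᵇ (f/g)²(t) g(t)² M(g,t) dt ≤ C ∫₁ᵇ f²`. The computation is done with
lower Lebesgue integrals in `ℝ≥0∞`, since `(f/g)²` need not be integrable. -/

theorem ofReal_intervalIntegral_eq_setLIntegral_Ioo {f : ℝ → ℝ} {a b : ℝ} (hab : a ≤ b)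
    (hf : IntegrableOn f (Ioo a b)) (hf₀ : ∀ x ∈ Ioo a b, 0 ≤ f x) :
    ENNReal.ofReal (∫ x in a..b, f x) = ∫⁻ x in Ioo a b, ENNReal.ofReal (f x) := by
  rw [intervalIntegral.integral_of_le hab, integral_Ioc_eq_integral_Ioo,
    ofReal_integral_eq_lintegral_ofReal hf (ae_restrict_of_forall_mem measurableSet_Ioo hf₀)]

theorem continuousOn_primitive_interval_of_le {f : ℝ → ℝ} {a b : ℝ} (hab : a ≤ b)
    (hf : IntegrableOn f (Icc a b)) : ContinuousOn (fun x => ∫ t in a..x, f t) (Icc a b) := by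
  rw [← uIcc_of_le hab] at hf ⊢
  exact intervalIntegral.continuousOn_primitive_interval hf

theorem ENNReal.ofReal_sq_eq_enorm_sq (y : ℝ) : ENNReal.ofReal (y ^ 2) = ‖y‖ₑ ^ 2 := by
  rw [← sq_abs, ENNReal.ofReal_pow (abs_nonneg y), Real.enorm_eq_ofReal_abs]

theorem ofReal_sq_integral_mul_le {α : Type*} [MeasurableSpace α] {μ : Measure α} {f g : α → ℝ}
    (hf : AEMeasurable f μ) (hg : AEMeasurable g μ) :
    ENNReal.ofReal ((∫ x, f x * g x ∂μ) ^ 2) ≤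
      (∫⁻ x, ENNReal.ofReal (f x ^ 2) ∂μ) * ∫⁻ x, ENNReal.ofReal (g x ^ 2) ∂μ := by
  have holder := ENNReal.lintegral_mul_le_Lp_mul_Lq μ Real.HolderConjugate.two_two
    hf.enorm hg.enorm
  simp only [ENNReal.ofReal_sq_eq_enorm_sq, ← ENNReal.rpow_two, Pi.mul_apply] at holder ⊢
  calc ‖∫ x, f x * g x ∂μ‖ₑ ^ (2 : ℝ)
      ≤ (∫⁻ x, ‖f x‖ₑ * ‖g x‖ₑ ∂μ) ^ (2 : ℝ) := by
        gcongr
        simpa only [enorm_mul] using enorm_integral_le_lintegral_enorm (fun x => f x * g x)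
    _ ≤ ((∫⁻ x, ‖f x‖ₑ ^ (2 : ℝ) ∂μ) ^ (1 / 2 : ℝ) *
          (∫⁻ x, ‖g x‖ₑ ^ (2 : ℝ) ∂μ) ^ (1 / 2 : ℝ)) ^ (2 : ℝ) := by gcongr
    _ = _ := by
        rw [ENNReal.mul_rpow_of_nonneg _ _ zero_le_two, ← ENNReal.rpow_mul, ← ENNReal.rpow_mul]
        norm_num

theorem lintegral_Ioo_lintegral_Ioo_swap {a b : ℝ} {F : ℝ → ℝ → ℝ≥0∞}
    (hF : Measurable (Function.uncurry F)) :
    ∫⁻ x in Ioo a b, ∫⁻ t in Ioo a x, F x t = ∫⁻ t in Ioo a b, ∫⁻ x in Ioo t b, F x t := by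
  let T : Set (ℝ × ℝ) := {p | a < p.2 ∧ p.2 < p.1 ∧ p.1 < b}
  have hT : MeasurableSet T :=
    (measurableSet_lt measurable_const measurable_snd).inter
      ((measurableSet_lt measurable_snd measurable_fst).inter
        (measurableSet_lt measurable_fst measurable_const))
  let K x t := T.indicator (Function.uncurry F) (x, t)
  have hleft x : (Ioo a b).indicator (fun x => ∫⁻ t in Ioo a x, F x t) x = ∫⁻ t, K x t := by
    by_cases hx : x ∈ Ioo a b
    · rw [indicator_of_mem hx, ← lintegral_indicator measurableSet_Ioo]
      congr 1 with t
      by_cases ht : t ∈ Ioo a x <;> simp_all [K, T]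
    · have hK t : K x t = 0 := indicator_of_notMem (fun h => hx ⟨h.1.trans h.2.1, h.2.2⟩) _
      simp [indicator_of_notMem hx, hK]
  have hright t : (Ioo a b).indicator (fun t => ∫⁻ x in Ioo t b, F x t) t = ∫⁻ x, K x t := by
    by_cases ht : t ∈ Ioo a b
    · rw [indicator_of_mem ht, ← lintegral_indicator measurableSet_Ioo]
      congr 1 with x
      by_cases hx : x ∈ Ioo t b <;> simp_all [K, T]
    · have hK x : K x t = 0 := indicator_of_notMem (fun h => ht ⟨h.1, h.2.1.trans h.2.2⟩) _
      simp [indicator_of_notMem ht, hK]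
  calc ∫⁻ x in Ioo a b, ∫⁻ t in Ioo a x, F x t
      = ∫⁻ x, ∫⁻ t, K x t := by rw [← lintegral_indicator measurableSet_Ioo]; simp only [hleft]
    _ = ∫⁻ t, ∫⁻ x, K x t := lintegral_lintegral_swap (hF.indicator hT).aemeasurable
    _ = ∫⁻ t in Ioo a b, ∫⁻ x in Ioo t b, F x t := by
        rw [← lintegral_indicator measurableSet_Ioo]; simp only [hright]

theorem setLIntegral_mul_sq_intervalIntegral_le {a b : ℝ} {k : ℝ → ℝ≥0∞} {f g : ℝ → ℝ}
    (hk : Measurable k) (hf : Measurable f) (hg : Measurable g) (hg₀ : ∀ x ∈ Ioo a b, g x ≠ 0) :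
    ∫⁻ x in Ioo a b, k x * ENNReal.ofReal ((∫ t in a..x, f t) ^ 2) ≤
      ∫⁻ t in Ioo a b, ENNReal.ofReal ((f t / g t) ^ 2) *
        ∫⁻ x in Ioo t b, k x * ∫⁻ u in Ioo a x, ENNReal.ofReal (g u ^ 2) := by
  set φ : ℝ → ℝ≥0∞ := fun t => ENNReal.ofReal ((f t / g t) ^ 2)
  set W : ℝ → ℝ≥0∞ := fun x => k x * ∫⁻ u in Ioo a x, ENNReal.ofReal (g u ^ 2)
  have hφ : Measurable φ := ((hf.div hg).pow_const 2).ennreal_ofReal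
  have hW : Measurable W :=
    hk.mul (Monotone.measurable fun x y hxy => lintegral_mono_set (Ioo_subset_Ioo_right hxy))
  have cauchy_schwarz : ∀ x ∈ Ioo a b, ENNReal.ofReal ((∫ t in a..x, f t) ^ 2) ≤
      (∫⁻ t in Ioo a x, φ t) * ∫⁻ u in Ioo a x, ENNReal.ofReal (g u ^ 2) := by
    intro x hx
    have hfactor : ∫ t in a..x, f t = ∫ t in Ioo a x, f t / g t * g t := by
      rw [intervalIntegral.integral_of_le hx.1.le, integral_Ioc_eq_integral_Ioo]
      exact setIntegral_congr_fun measurableSet_Ioo fun t ht =>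
        (div_mul_cancel₀ _ (hg₀ t ⟨ht.1, ht.2.trans hx.2⟩)).symm
    rw [hfactor]
    exact ofReal_sq_integral_mul_le (hf.div hg).aemeasurable hg.aemeasurable
  calc ∫⁻ x in Ioo a b, k x * ENNReal.ofReal ((∫ t in a..x, f t) ^ 2)
      ≤ ∫⁻ x in Ioo a b, ∫⁻ t in Ioo a x, W x * φ t := by
        refine setLIntegral_mono' measurableSet_Ioo fun x hx => ?_
        rw [lintegral_const_mul _ hφ, mul_assoc, mul_comm _ (∫⁻ t in Ioo a x, φ t)]
        gcongr
        exact cauchy_schwarz x hx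
    _ = ∫⁻ t in Ioo a b, ∫⁻ x in Ioo t b, W x * φ t :=
        lintegral_Ioo_lintegral_Ioo_swap ((hW.comp measurable_fst).mul (hφ.comp measurable_snd))
    _ = ∫⁻ t in Ioo a b, φ t * ∫⁻ x in Ioo t b, W x := by
        congr 1 with t
        rw [lintegral_mul_const _ hW, mul_comm]

theorem setLIntegral_one_div_sq_mul_setLIntegral_eq {a t b : ℝ} {g : ℝ → ℝ} (ha : 0 < a)
    (hat : a ≤ t) (htb : t ≤ b) (hg : IntegrableOn (fun u => g u ^ 2) (Icc a b)) :
    ∫⁻ x in Ioo t b, ENNReal.ofReal (1 / x ^ 2) * ∫⁻ u in Ioo a x, ENNReal.ofReal (g u ^ 2) =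
      ENNReal.ofReal (∫ x in t..b, 1 / x ^ 2 * ∫ u in a..x, g u ^ 2) := by
  have hG : ContinuousOn (fun x => ∫ u in a..x, g u ^ 2) (Icc a b) :=
    continuousOn_primitive_interval_of_le (hat.trans htb) hg
  have hpos : ∀ x ∈ Icc t b, 0 < x := fun x hx => ha.trans_le (hat.trans hx.1)
  rw [ofReal_intervalIntegral_eq_setLIntegral_Ioo htb]
  · refine setLIntegral_congr_fun measurableSet_Ioo fun x hx => ?_
    have hax : a ≤ x := hat.trans hx.1.le
    rw [← ofReal_intervalIntegral_eq_setLIntegral_Ioo hax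
      (hg.mono_set (Ioo_subset_Icc_self.trans (Icc_subset_Icc_right hx.2.le)))
      (fun u _ => sq_nonneg _), ← ENNReal.ofReal_mul (by positivity)]
  · refine ContinuousOn.integrableOn_Icc ?_ |>.mono_set Ioo_subset_Icc_self
    exact (continuousOn_const.div (continuousOn_id.pow 2)
      fun x hx => (pow_pos (hpos x hx) 2).ne').mul (hG.mono (Icc_subset_Icc_left hat))
  · intro x hx
    exact mul_nonneg (by positivity)
      (intervalIntegral.integral_nonneg (hat.trans hx.1.le) fun u _ => sq_nonneg _)

theorem setLIntegral_one_div_sq_mul_setLIntegral_le {a b t C : ℝ} {g : ℝ → ℝ} (ha : 0 < a)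
    (hg : IntegrableOn (fun u => g u ^ 2) (Icc a b)) (ht : t ∈ Ioo a b) (hgt : g t ≠ 0)
    (hM : 1 / g t ^ 2 * ∫ x in t..b, 1 / x ^ 2 * ∫ u in a..x, g u ^ 2 ≤ C) :
    ∫⁻ x in Ioo t b, ENNReal.ofReal (1 / x ^ 2) * ∫⁻ u in Ioo a x, ENNReal.ofReal (g u ^ 2) ≤
      ENNReal.ofReal (C * g t ^ 2) := by
  rw [setLIntegral_one_div_sq_mul_setLIntegral_eq ha ht.1.le ht.2.le hg]
  refine ENNReal.ofReal_le_ofReal ?_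
  rwa [← div_le_iff₀ (by positivity), div_eq_inv_mul, ← one_div]

theorem ofReal_intervalIntegral_sq_one_div_mul_eq {f : ℝ → ℝ} {a b : ℝ} (ha : 0 < a)
    (hab : a ≤ b) (hf : IntegrableOn f (Icc a b)) :
    ENNReal.ofReal (∫ x in a..b, ((1 / x) * ∫ t in a..x, f t) ^ 2) =
      ∫⁻ x in Ioo a b, ENNReal.ofReal (1 / x ^ 2) * ENNReal.ofReal ((∫ t in a..x, f t) ^ 2) := by
  have hint : IntegrableOn (fun x => ((1 / x) * ∫ t in a..x, f t) ^ 2) (Ioo a b) :=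
    (((continuousOn_const.div continuousOn_id fun x hx => (ha.trans_le hx.1).ne').mul
      (continuousOn_primitive_interval_of_le hab hf)).pow 2).integrableOn_Icc.mono_set
        Ioo_subset_Icc_self
  rw [ofReal_intervalIntegral_eq_setLIntegral_Ioo hab hint fun _ _ => sq_nonneg _]
  refine setLIntegral_congr_fun measurableSet_Ioo fun x hx => ?_
  rw [← ENNReal.ofReal_mul (by positivity), mul_pow, one_div_pow]

theorem hardy_test_function_method (b : ℝ) (hb : 1 < b) (f g : ℝ → ℝ)
    (hfm : Measurable f) (hgm : Measurable g)
    (hf : IntegrableOn (fun x => f x ^ 2) (Set.Icc 1 b))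
    (hg : IntegrableOn (fun x => g x ^ 2) (Set.Icc 1 b))
    (hgne : ∀ x ∈ Set.Ioo (1 : ℝ) b, g x ≠ 0)
    (C : ℝ)
    (hM : ∀ t ∈ Set.Ioo (1 : ℝ) b,
      (1 / g t ^ 2) *
          ∫ x in t..b, (1 / x ^ 2) * ∫ u in (1 : ℝ)..x, g u ^ 2 ≤ C) :
    ∫ x in (1 : ℝ)..b, ((1 / x) * ∫ t in (1 : ℝ)..x, f t) ^ 2
      ≤ C * ∫ t in (1 : ℝ)..b, f t ^ 2 := by
  have hC : 0 ≤ C := by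
    obtain ⟨t, ht⟩ := nonempty_Ioo.2 hb
    refine le_trans (mul_nonneg (by positivity) ?_) (hM t ht)
    exact intervalIntegral.integral_nonneg ht.2.le fun x hx => mul_nonneg (by positivity)
      (intervalIntegral.integral_nonneg (ht.1.le.trans hx.1) fun u _ => sq_nonneg _)
  have hf₁ : IntegrableOn f (Icc 1 b) :=
    ((memLp_two_iff_integrable_sq hfm.aestronglyMeasurable).2 hf).integrable one_le_two
  rw [← ENNReal.ofReal_le_ofReal_iff
    (mul_nonneg hC (intervalIntegral.integral_nonneg hb.le fun _ _ => sq_nonneg _))]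
  calc
    _ = ∫⁻ x in Ioo 1 b, ENNReal.ofReal (1 / x ^ 2) *
          ENNReal.ofReal ((∫ t in (1 : ℝ)..x, f t) ^ 2) :=
        ofReal_intervalIntegral_sq_one_div_mul_eq one_pos hb.le hf₁
    _ ≤ ∫⁻ t in Ioo 1 b, ENNReal.ofReal ((f t / g t) ^ 2) * ∫⁻ x in Ioo t b,
          ENNReal.ofReal (1 / x ^ 2) * ∫⁻ u in Ioo 1 x, ENNReal.ofReal (g u ^ 2) :=
        setLIntegral_mul_sq_intervalIntegral_le (by fun_prop) hfm hgm hgne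
    _ ≤ ∫⁻ t in Ioo 1 b, ENNReal.ofReal ((f t / g t) ^ 2) * ENNReal.ofReal (C * g t ^ 2) :=
        setLIntegral_mono' measurableSet_Ioo fun t ht => by
          gcongr
          exact setLIntegral_one_div_sq_mul_setLIntegral_le one_pos hg ht (hgne t ht) (hM t ht)
    _ = ∫⁻ t in Ioo 1 b, ENNReal.ofReal C * ENNReal.ofReal (f t ^ 2) := by
        refine setLIntegral_congr_fun measurableSet_Ioo fun t ht => ?_
        rw [← ENNReal.ofReal_mul (sq_nonneg _), ← ENNReal.ofReal_mul hC]
        field_simp [hgne t ht]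
    _ = ENNReal.ofReal (C * ∫ t in (1 : ℝ)..b, f t ^ 2) := by
        rw [lintegral_const_mul _ (hfm.pow_const 2).ennreal_ofReal, ENNReal.ofReal_mul hC,
          ofReal_intervalIntegral_eq_setLIntegral_Ioo hb.le (hf.mono_set Ioo_subset_Icc_self)
            fun _ _ => sq_nonneg _]
end

section
/- Let $n\ge 1$ and let $\alpha$ be the unique solution of $\tan(\alpha\ln(n+1))+2\alpha=0$ in the interval $(\pi/(2\ln(n+1)),\,\pi/\ln(n+1))$. Then the function $x\mapsto \sqrt{x}\,\sin(\alpha\ln x)$ is monotonically increasing on $[1,n+1]$. -/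
/-!
The derivative of `√x · sin (α log x)` is `(sin θ + 2α cos θ) / (2√x)` with `θ = α log x`.
For `x ∈ [1, n + 1]` the angle `θ` runs over `[0, θ₀]`, `θ₀ = α log (n + 1) ∈ (π/2, π)`, and the
root condition `2α = -tan θ₀` turns the numerator into `sin (θ - θ₀) / cos θ₀`, a quotient of two
nonpositive numbers.
-/

open Real

theorem sin_sub_tan_mul_cos_eq {θ θ₀ : ℝ} (h : cos θ₀ ≠ 0) :
    sin θ - tan θ₀ * cos θ = sin (θ - θ₀) / cos θ₀ := by
  rw [tan_eq_sin_div_cos, sin_sub]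
  field_simp

theorem sin_sub_tan_mul_cos_nonneg {θ θ₀ : ℝ} (hθ₀ : π / 2 < θ₀) (hθ₀π : θ₀ < π)
    (hθ : 0 ≤ θ) (hθθ₀ : θ ≤ θ₀) : 0 ≤ sin θ - tan θ₀ * cos θ := by
  have hcos : cos θ₀ < 0 := cos_neg_of_pi_div_two_lt_of_lt hθ₀ (by linarith)
  rw [sin_sub_tan_mul_cos_eq hcos.ne]
  exact div_nonneg_of_nonpos (sin_nonpos_of_nonpos_of_neg_pi_le (by linarith) (by linarith))
    hcos.le

theorem tan_neg_of_pi_div_two_lt_of_lt_pi {θ : ℝ} (h₁ : π / 2 < θ) (h₂ : θ < π) : tan θ < 0 := by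
  rw [tan_eq_sin_div_cos]
  exact div_neg_of_pos_of_neg (sin_pos_of_pos_of_lt_pi (by linarith [pi_pos]) h₂)
    (cos_neg_of_pi_div_two_lt_of_lt h₁ (by linarith))

theorem hasDerivAt_sqrt_mul_sin_log (α : ℝ) {x : ℝ} (hx : 0 < x) :
    HasDerivAt (fun x => √x * sin (α * log x))
      ((sin (α * log x) + 2 * α * cos (α * log x)) / (2 * √x)) x := by
  have hsin := ((hasDerivAt_log hx.ne').const_mul α).sin
  refine ((hasDerivAt_sqrt hx.ne').mul hsin).congr_deriv ?_
  have hsqrt : √x ≠ 0 := (sqrt_pos.mpr hx).ne'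
  field_simp
  rw [sq_sqrt hx.le]
  ring

theorem monotoneOn_sqrt_mul_sin_log {α b : ℝ} (h₁ : π / 2 < α * log b) (h₂ : α * log b < π)
    (hroot : tan (α * log b) + 2 * α = 0) :
    MonotoneOn (fun x => √x * sin (α * log x)) (Set.Icc 1 b) := by
  have hα : 0 ≤ α := by linarith [tan_neg_of_pi_div_two_lt_of_lt_pi h₁ h₂]
  have hderiv (x : ℝ) (hx : x ∈ Set.Icc 1 b) := hasDerivAt_sqrt_mul_sin_log α
    (zero_lt_one.trans_le hx.1)
  refine monotoneOn_of_hasDerivWithinAt_nonneg (convex_Icc 1 b)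
    (fun x hx => (hderiv x hx).continuousAt.continuousWithinAt)
    (fun x hx => (hderiv x (interior_subset hx)).hasDerivWithinAt) fun x hx => ?_
  obtain ⟨hx1, hxb⟩ := interior_subset hx
  have hlog : 0 ≤ log x := log_nonneg hx1
  have hlogb : log x ≤ log b := log_le_log (zero_lt_one.trans_le hx1) hxb
  have hnum := sin_sub_tan_mul_cos_nonneg h₁ h₂ (mul_nonneg hα hlog)
    (mul_le_mul_of_nonneg_left hlogb hα)
  rw [show tan (α * log b) = -(2 * α) by linarith] at hnum
  exact div_nonneg (by linarith) (by positivity)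

theorem sqrt_sin_log_monotone_general (n : ℕ) (α : ℝ)
    (hα : α ∈ Set.Ioo (π / (2 * Real.log (n + 1))) (π / Real.log (n + 1)))
    (hroot : Real.tan (α * Real.log (n + 1)) + 2 * α = 0) :
    MonotoneOn (fun x : ℝ => Real.sqrt x * Real.sin (α * Real.log x))
      (Set.Icc 1 ((n : ℝ) + 1)) := by
  obtain ⟨hα₁, hα₂⟩ := hα
  have hlog : 0 < log ((n : ℝ) + 1) := by
    refine (log_nonneg (by linarith [n.cast_nonneg (α := ℝ)])).lt_of_ne' fun h => ?_
    rw [h] at hα₁ hα₂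
    simp only [mul_zero, div_zero] at hα₁ hα₂
    linarith
  refine monotoneOn_sqrt_mul_sin_log ?_ ?_ hroot
  · rwa [div_lt_iff₀ (by positivity), mul_comm 2, ← mul_assoc, ← div_lt_iff₀ two_pos] at hα₁
  · rwa [lt_div_iff₀ hlog] at hα₂

theorem sqrt_sin_log_monotone (n : ℕ) (hn : 1 ≤ n) (α : ℝ)
    (hα : α ∈ Set.Ioo (π / (2 * Real.log (n + 1))) (π / Real.log (n + 1)))
    (hroot : Real.tan (α * Real.log (n + 1)) + 2 * α = 0) :
    MonotoneOn (fun x : ℝ => Real.sqrt x * Real.sin (α * Real.log x))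
      (Set.Icc 1 ((n : ℝ) + 1)) :=
  sqrt_sin_log_monotone_general n α hα hroot
end

section
/- Let $n\ge 1$, let $\alpha$ be the unique solution of $\tan(\alpha\ln(n+1))+2\alpha=0$ in $(\pi/(2\ln(n+1)),\,\pi/\ln(n+1))$, let $h(x)=x^{-1/2}\big(2\alpha\cos(\alpha\ln x)+\sin(\alpha\ln x)\big)$, and set $a_k=\int_k^{k+1}h(x)\,dx$ for $k=1,\dots,n$. Then for every $i$ with $1\le i\le n$, $\sum_{k=i}^{n}\frac{1}{k^2}\sum_{j=1}^{k}a_j \;\ge\; \frac{4}{1+4\alpha^2}\,a_i$. -/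
open Real MeasureTheory Finset

/-!
With `H x = 2 √x sin (α log x)` one has `H' = h` and `h' = -(1 + 4α²)/4 · H x / x²`. The choice
of `α` keeps `α log x` in `[0, π]` on `[1, n + 1]` and makes `h (n + 1) = 0`, so `h` decreases to
`0` there and `H` increases from `H 1 = 0`. Hence `∑_{j ≤ k} a_j = H (k + 1)`, and since
`H x / x² ≤ H (k + 1) / k²` on `[k, k + 1]`, the `k`-th term dominates
`∫_k^{k+1} H x / x² dx = 4/(1 + 4α²) (h k - h (k + 1))`. Summing telescopes to
`4/(1 + 4α²) h i`, and `a_i ≤ h i` because `h` decreases.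
-/

noncomputable def hardyWeight (α x : ℝ) : ℝ :=
  x ^ (-(1 : ℝ) / 2) * (2 * α * cos (α * log x) + sin (α * log x))

noncomputable def hardyPrimitive (α x : ℝ) : ℝ :=
  2 * x ^ ((1 : ℝ) / 2) * sin (α * log x)

section

variable (α : ℝ) {x : ℝ}

theorem hasDerivAt_hardyPrimitive (hx : 0 < x) :
    HasDerivAt (hardyPrimitive α) (hardyWeight α x) x := by
  have hlog : HasDerivAt (fun y ↦ α * log y) (α * x⁻¹) x :=
    (hasDerivAt_log hx.ne').const_mul α
  refine (((hasDerivAt_rpow_const (p := 1 / 2) (Or.inl hx.ne')).const_mul 2).fun_mul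
    hlog.sin).congr_deriv ?_
  rw [hardyWeight, show (1 : ℝ) / 2 - 1 = -1 / 2 by norm_num,
    show (1 : ℝ) / 2 = -1 / 2 + 1 by norm_num, rpow_add_one hx.ne']
  field_simp
  ring

theorem hasDerivAt_hardyWeight (hx : 0 < x) :
    HasDerivAt (hardyWeight α) (-(1 + 4 * α ^ 2) / 4 * (hardyPrimitive α x / x ^ 2)) x := by
  have hlog : HasDerivAt (fun y ↦ α * log y) (α * x⁻¹) x :=
    (hasDerivAt_log hx.ne').const_mul α
  refine ((hasDerivAt_rpow_const (p := -1 / 2) (Or.inl hx.ne')).fun_mul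
    ((hlog.cos.const_mul (2 * α)).fun_add hlog.sin)).congr_deriv ?_
  rw [hardyPrimitive, rpow_sub_one hx.ne', show (1 : ℝ) / 2 = -1 / 2 + 1 by norm_num,
    rpow_add_one hx.ne']
  field_simp
  ring

theorem integral_hardyWeight {a c : ℝ} (ha : 0 < a) (hc : 0 < c) :
    ∫ x in a..c, hardyWeight α x = hardyPrimitive α c - hardyPrimitive α a := by
  have hpos : ∀ x ∈ Set.uIcc a c, 0 < x := fun x hx ↦ (lt_min ha hc).trans_le hx.1
  refine intervalIntegral.integral_eq_sub_of_hasDerivAt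
    (fun x hx ↦ hasDerivAt_hardyPrimitive α (hpos x hx)) ?_
  exact ContinuousOn.intervalIntegrable fun x hx ↦
    (hasDerivAt_hardyWeight α (hpos x hx)).continuousAt.continuousWithinAt

theorem intervalIntegrable_hardyPrimitive_div_sq {a c : ℝ} (ha : 0 < a) (hc : 0 < c) :
    IntervalIntegrable (fun x ↦ hardyPrimitive α x / x ^ 2) volume a c := by
  have hpos : ∀ x ∈ Set.uIcc a c, 0 < x := fun x hx ↦ (lt_min ha hc).trans_le hx.1
  exact ContinuousOn.intervalIntegrable fun x hx ↦
    ((hasDerivAt_hardyPrimitive α (hpos x hx)).continuousAt.div (continuousAt_id.pow 2)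
      (pow_ne_zero 2 (hpos x hx).ne')).continuousWithinAt

theorem integral_hardyPrimitive_div_sq {a c : ℝ} (ha : 0 < a) (hc : 0 < c) :
    ∫ x in a..c, hardyPrimitive α x / x ^ 2 =
      4 / (1 + 4 * α ^ 2) * (hardyWeight α a - hardyWeight α c) := by
  have hftc := intervalIntegral.integral_eq_sub_of_hasDerivAt
    (fun x hx ↦ hasDerivAt_hardyWeight α ((lt_min ha hc).trans_le hx.1))
    ((intervalIntegrable_hardyPrimitive_div_sq α ha hc).const_mul _)
  rw [intervalIntegral.integral_const_mul] at hftc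
  field_simp
  linarith

theorem hardyPrimitive_nonneg {b : ℝ} (hα : 0 ≤ α) (hb : α * log b ≤ π) (hx : x ∈ Set.Icc 1 b) :
    0 ≤ hardyPrimitive α x := by
  have hlog : log x ≤ log b := log_le_log (by linarith [hx.1]) hx.2
  have hsin : 0 ≤ sin (α * log x) := sin_nonneg_of_nonneg_of_le_pi
    (mul_nonneg hα (log_nonneg hx.1)) ((mul_le_mul_of_nonneg_left hlog hα).trans hb)
  exact mul_nonneg (mul_nonneg zero_le_two (rpow_nonneg (by linarith [hx.1]) _)) hsin

theorem antitoneOn_hardyWeight {b : ℝ} (hα : 0 ≤ α) (hb : α * log b ≤ π) :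
    AntitoneOn (hardyWeight α) (Set.Icc 1 b) := by
  refine antitoneOn_of_hasDerivWithinAt_nonpos (convex_Icc 1 b)
    (fun x hx ↦ (hasDerivAt_hardyWeight α (by linarith [hx.1])).continuousAt.continuousWithinAt)
    (fun x hx ↦ (hasDerivAt_hardyWeight α
      (by rw [interior_Icc] at hx; linarith [hx.1])).hasDerivWithinAt)
    fun x hx ↦ ?_
  rw [interior_Icc] at hx
  exact mul_nonpos_of_nonpos_of_nonneg (by linarith [sq_nonneg α])
    (div_nonneg (hardyPrimitive_nonneg α hα hb (Set.Ioo_subset_Icc_self hx)) (sq_nonneg x))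

theorem hardyWeight_nonneg {b : ℝ} (hα : 0 ≤ α) (hb : α * log b ≤ π) (hzero : hardyWeight α b = 0)
    (hx : x ∈ Set.Icc 1 b) : 0 ≤ hardyWeight α x :=
  hzero ▸ antitoneOn_hardyWeight α hα hb hx ⟨hx.1.trans hx.2, le_rfl⟩ hx.2

theorem monotoneOn_hardyPrimitive {b : ℝ} (hα : 0 ≤ α) (hb : α * log b ≤ π)
    (hzero : hardyWeight α b = 0) : MonotoneOn (hardyPrimitive α) (Set.Icc 1 b) := by
  refine monotoneOn_of_hasDerivWithinAt_nonneg (convex_Icc 1 b)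
    (fun x hx ↦ (hasDerivAt_hardyPrimitive α (by linarith [hx.1])).continuousAt.continuousWithinAt)
    (fun x hx ↦ (hasDerivAt_hardyPrimitive α
      (by rw [interior_Icc] at hx; linarith [hx.1])).hasDerivWithinAt)
    fun x hx ↦ ?_
  rw [interior_Icc] at hx
  exact hardyWeight_nonneg α hα hb hzero (Set.Ioo_subset_Icc_self hx)

theorem hardyWeight_eq_zero_of_tan {b : ℝ} (hcos : cos (α * log b) ≠ 0)
    (htan : tan (α * log b) + 2 * α = 0) : hardyWeight α b = 0 := by
  rw [tan_eq_sin_div_cos] at htan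
  have : 2 * α * cos (α * log b) + sin (α * log b) = 0 := by
    field_simp at htan
    linarith
  rw [hardyWeight, this, mul_zero]

theorem sum_integral_hardyWeight (k : ℕ) :
    ∑ j ∈ Icc 1 k, ∫ x in (j : ℝ)..(j : ℝ) + 1, hardyWeight α x = hardyPrimitive α (k + 1) := by
  induction k with
  | zero => simp [hardyPrimitive]
  | succ k ih =>
    rw [sum_Icc_succ_top (by omega), ih, integral_hardyWeight α (by positivity) (by positivity)]
    push_cast
    ring

theorem hardyWeight_sub_le_hardyPrimitive_div_sq {b k : ℝ} (hα : 0 ≤ α) (hb : α * log b ≤ π)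
    (hzero : hardyWeight α b = 0) (hk : 1 ≤ k) (hkb : k + 1 ≤ b) :
    4 / (1 + 4 * α ^ 2) * (hardyWeight α k - hardyWeight α (k + 1)) ≤
      hardyPrimitive α (k + 1) / k ^ 2 := by
  rw [← integral_hardyPrimitive_div_sq α (by linarith) (by linarith)]
  calc ∫ x in k..k + 1, hardyPrimitive α x / x ^ 2
      ≤ ∫ _ in k..k + 1, hardyPrimitive α (k + 1) / k ^ 2 := by
        refine intervalIntegral.integral_mono_on (by linarith) ?_ intervalIntegrable_const
          fun x hx ↦ ?_
        · exact intervalIntegrable_hardyPrimitive_div_sq α (by linarith) (by linarith)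
        · have hx1 : x ∈ Set.Icc 1 b := ⟨hk.trans hx.1, hx.2.trans hkb⟩
          exact div_le_div₀ (hardyPrimitive_nonneg α hα hb ⟨by linarith, hkb⟩)
            (monotoneOn_hardyPrimitive α hα hb hzero hx1 ⟨by linarith, hkb⟩ hx.2)
            (by positivity) (pow_le_pow_left₀ (by linarith) hx.1 2)
    _ = hardyPrimitive α (k + 1) / k ^ 2 := by simp

theorem hardyWeight_le_sum_hardyPrimitive_div_sq {n i : ℕ} (hα : 0 ≤ α)
    (hb : α * log (n + 1) ≤ π) (hzero : hardyWeight α (n + 1) = 0) (hi : 1 ≤ i) (hin : i ≤ n) :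
    4 / (1 + 4 * α ^ 2) * hardyWeight α i ≤ ∑ k ∈ Icc i n, hardyPrimitive α (k + 1) / k ^ 2 := by
  have htelescope := sum_Icc_sub hin fun m : ℕ ↦ -hardyWeight α m
  simp only [Nat.cast_add, Nat.cast_one, neg_sub_neg, hzero, sub_zero] at htelescope
  rw [← htelescope, mul_sum]
  refine sum_le_sum fun k hk ↦ ?_
  obtain ⟨hik, hkn⟩ := mem_Icc.mp hk
  exact hardyWeight_sub_le_hardyPrimitive_div_sq α hα hb hzero
    (by exact_mod_cast hi.trans hik) (by exact_mod_cast Nat.add_le_add_right hkn 1)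

theorem integral_hardyWeight_le {b : ℝ} (hα : 0 ≤ α) (hb : α * log b ≤ π) (hx : 1 ≤ x)
    (hxb : x + 1 ≤ b) : ∫ y in x..x + 1, hardyWeight α y ≤ hardyWeight α x := by
  have hanti : AntitoneOn (hardyWeight α) (Set.Icc x (x + (1 : ℕ))) :=
    (antitoneOn_hardyWeight α hα hb).mono (Set.Icc_subset_Icc hx (by simpa using hxb))
  simpa using hanti.integral_le_sum

end

theorem pos_and_mul_mem_Ioo_of_mem_Ioo_div {α L : ℝ} (hL : 0 ≤ L)
    (hα : α ∈ Set.Ioo (π / (2 * L)) (π / L)) : 0 < α ∧ α * L ∈ Set.Ioo (π / 2) π := by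
  obtain ⟨hα₁, hα₂⟩ := hα
  have hL : 0 < L := hL.lt_of_ne' fun hL ↦ by
    simp only [hL, mul_zero, div_zero] at hα₁ hα₂
    linarith
  refine ⟨(by positivity : 0 < π / (2 * L)).trans hα₁, ?_, (lt_div_iff₀ hL).mp hα₂⟩
  linarith [(div_lt_iff₀ (by positivity : 0 < 2 * L)).mp hα₁]

theorem discrete_hardy_pointwise_bound_general (n : ℕ) (α : ℝ)
    (hα : α ∈ Set.Ioo (π / (2 * Real.log (n + 1))) (π / Real.log (n + 1)))
    (hroot : Real.tan (α * Real.log (n + 1)) + 2 * α = 0)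
    (h : ℝ → ℝ)
    (hh : ∀ x, h x = x ^ (-(1 : ℝ) / 2) *
      (2 * α * Real.cos (α * Real.log x) + Real.sin (α * Real.log x)))
    (a : ℕ → ℝ) (ha : ∀ k, 1 ≤ k → k ≤ n → a k = ∫ x in (k : ℝ)..((k : ℝ) + 1), h x)
    (i : ℕ) (hi1 : 1 ≤ i) (hin : i ≤ n) :
    ∑ k ∈ Finset.Icc i n, (1 / (k : ℝ) ^ 2) * ∑ j ∈ Finset.Icc 1 k, a j
      ≥ (4 / (1 + 4 * α ^ 2)) * a i := by
  obtain rfl : h = hardyWeight α := funext hh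
  obtain ⟨hα0, hθ, hθπ⟩ := pos_and_mul_mem_Ioo_of_mem_Ioo_div (log_nonneg (by simp)) hα
  have hzero : hardyWeight α (n + 1) = 0 := hardyWeight_eq_zero_of_tan α
    (cos_neg_of_pi_div_two_lt_of_lt hθ (by linarith)).ne hroot
  have hsum (k : ℕ) (hkn : k ≤ n) : ∑ j ∈ Icc 1 k, a j = hardyPrimitive α (k + 1) := by
    rw [← sum_integral_hardyWeight α k]
    exact sum_congr rfl fun j hj ↦ ha j (mem_Icc.mp hj).1 ((mem_Icc.mp hj).2.trans hkn)
  have hai : a i ≤ hardyWeight α i := ha i hi1 hin ▸ integral_hardyWeight_le α hα0.le hθπ.le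
    (by exact_mod_cast hi1) (by exact_mod_cast Nat.add_le_add_right hin 1)
  calc ∑ k ∈ Icc i n, 1 / (k : ℝ) ^ 2 * ∑ j ∈ Icc 1 k, a j
      = ∑ k ∈ Icc i n, hardyPrimitive α (k + 1) / k ^ 2 :=
        sum_congr rfl fun k hk ↦ by rw [hsum k (mem_Icc.mp hk).2, one_div_mul_eq_div]
    _ ≥ 4 / (1 + 4 * α ^ 2) * hardyWeight α i :=
        hardyWeight_le_sum_hardyPrimitive_div_sq α hα0.le hθπ.le hzero hi1 hin
    _ ≥ 4 / (1 + 4 * α ^ 2) * a i := by gcongr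

theorem discrete_hardy_pointwise_bound (n : ℕ) (hn : 1 ≤ n) (α : ℝ)
    (hα : α ∈ Set.Ioo (π / (2 * Real.log (n + 1))) (π / Real.log (n + 1)))
    (hroot : Real.tan (α * Real.log (n + 1)) + 2 * α = 0)
    (h : ℝ → ℝ)
    (hh : ∀ x, h x = x ^ (-(1 : ℝ) / 2) *
      (2 * α * Real.cos (α * Real.log x) + Real.sin (α * Real.log x)))
    (a : ℕ → ℝ) (ha : ∀ k, 1 ≤ k → k ≤ n → a k = ∫ x in (k : ℝ)..((k : ℝ) + 1), h x)
    (i : ℕ) (hi1 : 1 ≤ i) (hin : i ≤ n) :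
    ∑ k ∈ Finset.Icc i n, (1 / (k : ℝ) ^ 2) * ∑ j ∈ Finset.Icc 1 k, a j
      ≥ (4 / (1 + 4 * α ^ 2)) * a i :=
  discrete_hardy_pointwise_bound_general n α hα hroot h hh a ha i hi1 hin
end
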